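/- arXiv:math/0011235 — 8 statements merged into one kernel-verified Lean document; each statement's English description precedes it below -/
import Mathlib

section
/- For every n ≥ 0 and every m ≥ 0, the number of permutations of [n] containing exactly m (a-bc)-subwords, the number containing exactly m (c-ba)-subwords, the number containing exactly m (ab-c)-subwords, and the number containing exactly m (cb-a)-subwords are all equal; i.e. the four pattern statistics (a-bc), (c-ba), (ab-c), (cb-a) are equidistributed over S_n. -/
/-- Number of (a-bc)-subwords of `π`: pairs of (0-based) indices `(i, j)` with
`i < j`, `j + 1 < n` and `π i < π j < π (j+1)`. -/
noncomputable def cntAdBC (n : ℕ) (π : Equiv.Perm (Fin n)) : ℕ :=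
  {p : ℕ × ℕ | ∃ (hi : p.1 < n) (hj : p.2 + 1 < n),
    p.1 < p.2 ∧ π ⟨p.1, hi⟩ < π ⟨p.2, Nat.lt_of_succ_lt hj⟩ ∧
      π ⟨p.2, Nat.lt_of_succ_lt hj⟩ < π ⟨p.2 + 1, hj⟩}.ncard

/-- Number of (c-ba)-subwords of `π`: pairs `(i, j)` with `i < j`, `j + 1 < n` and
`π (j+1) < π j < π i`. -/
noncomputable def cntCdBA (n : ℕ) (π : Equiv.Perm (Fin n)) : ℕ :=
  {p : ℕ × ℕ | ∃ (hi : p.1 < n) (hj : p.2 + 1 < n),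
    p.1 < p.2 ∧ π ⟨p.2 + 1, hj⟩ < π ⟨p.2, Nat.lt_of_succ_lt hj⟩ ∧
      π ⟨p.2, Nat.lt_of_succ_lt hj⟩ < π ⟨p.1, hi⟩}.ncard

/-- Number of (ab-c)-subwords of `π`: pairs `(i, j)` with `i + 1 < j < n` and
`π i < π (i+1) < π j`. -/
noncomputable def cntABdC (n : ℕ) (π : Equiv.Perm (Fin n)) : ℕ :=
  {p : ℕ × ℕ | ∃ (hi : p.1 + 1 < n) (hj : p.2 < n),
    p.1 + 1 < p.2 ∧ π ⟨p.1, Nat.lt_of_succ_lt hi⟩ < π ⟨p.1 + 1, hi⟩ ∧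
      π ⟨p.1 + 1, hi⟩ < π ⟨p.2, hj⟩}.ncard

/-- Number of (cb-a)-subwords of `π`: pairs `(i, j)` with `i + 1 < j < n` and
`π j < π (i+1) < π i`. -/
noncomputable def cntCBdA (n : ℕ) (π : Equiv.Perm (Fin n)) : ℕ :=
  {p : ℕ × ℕ | ∃ (hi : p.1 + 1 < n) (hj : p.2 < n),
    p.1 + 1 < p.2 ∧ π ⟨p.2, hj⟩ < π ⟨p.1 + 1, hi⟩ ∧
      π ⟨p.1 + 1, hi⟩ < π ⟨p.1, Nat.lt_of_succ_lt hi⟩}.ncard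

/-- Complement: composing with `Fin.revPerm` on the left turns (a-bc) into (c-ba). -/
lemma cntCdBA_revPerm_mul (n : ℕ) (π : Equiv.Perm (Fin n)) :
    cntCdBA n ((Fin.revPerm : Equiv.Perm (Fin n)) * π) = cntAdBC n π := by
  unfold cntCdBA cntAdBC
  congr 1
  ext p
  simp only [Set.mem_setOf_eq, Equiv.Perm.mul_apply, Fin.revPerm_apply, Fin.rev_lt_rev]
  constructor
  · rintro ⟨hi, hj, h1, h2, h3⟩; exact ⟨hi, hj, h1, h3, h2⟩
  · rintro ⟨hi, hj, h1, h2, h3⟩; exact ⟨hi, hj, h1, h3, h2⟩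

/-- Complement: composing with `Fin.revPerm` on the left turns (cb-a) into (ab-c). -/
lemma cntABdC_revPerm_mul (n : ℕ) (π : Equiv.Perm (Fin n)) :
    cntABdC n ((Fin.revPerm : Equiv.Perm (Fin n)) * π) = cntCBdA n π := by
  unfold cntABdC cntCBdA
  congr 1
  ext p
  simp only [Set.mem_setOf_eq, Equiv.Perm.mul_apply, Fin.revPerm_apply, Fin.rev_lt_rev]
  constructor
  · rintro ⟨hi, hj, h1, h2, h3⟩; exact ⟨hi, hj, h1, h3, h2⟩
  · rintro ⟨hi, hj, h1, h2, h3⟩; exact ⟨hi, hj, h1, h3, h2⟩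

lemma mul_revPerm_apply (n : ℕ) (π : Equiv.Perm (Fin n)) (k : ℕ) (hk : k < n)
    (l : ℕ) (hl : l < n) (hkl : l = n - 1 - k) :
    (π * (Fin.revPerm : Equiv.Perm (Fin n))) ⟨k, hk⟩ = π ⟨l, hl⟩ := by
  have h : Fin.rev (⟨k, hk⟩ : Fin n) = ⟨l, hl⟩ := by
    ext
    simp only [Fin.val_rev]
    omega
  simp only [Equiv.Perm.mul_apply, Fin.revPerm_apply, h]

/-- Reversal: composing with `Fin.revPerm` on the right turns (a-bc) into (cb-a). -/
lemma cntCBdA_mul_revPerm (n : ℕ) (π : Equiv.Perm (Fin n)) :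
    cntCBdA n (π * (Fin.revPerm : Equiv.Perm (Fin n))) = cntAdBC n π := by
  unfold cntCBdA cntAdBC
  set σ := π * (Fin.revPerm : Equiv.Perm (Fin n)) with hσ
  have hset : {p : ℕ × ℕ | ∃ (hi : p.1 + 1 < n) (hj : p.2 < n),
      p.1 + 1 < p.2 ∧ σ ⟨p.2, hj⟩ < σ ⟨p.1 + 1, hi⟩ ∧
        σ ⟨p.1 + 1, hi⟩ < σ ⟨p.1, Nat.lt_of_succ_lt hi⟩}
      = (fun p : ℕ × ℕ => (n - 2 - p.2, n - 1 - p.1)) ''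
        {p : ℕ × ℕ | ∃ (hi : p.1 < n) (hj : p.2 + 1 < n),
          p.1 < p.2 ∧ π ⟨p.1, hi⟩ < π ⟨p.2, Nat.lt_of_succ_lt hj⟩ ∧
            π ⟨p.2, Nat.lt_of_succ_lt hj⟩ < π ⟨p.2 + 1, hj⟩} := by
    ext ⟨i, j⟩
    simp only [Set.mem_setOf_eq, Set.mem_image, Prod.mk.injEq, Prod.exists]
    constructor
    · rintro ⟨hi, hj, h1, h2, h3⟩
      refine ⟨n - 1 - j, n - 2 - i, ⟨by omega, by omega, by omega, ?_, ?_⟩, by omega, by omega⟩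
      · rw [← mul_revPerm_apply n π j hj (n - 1 - j) (by omega) rfl,
            ← mul_revPerm_apply n π (i + 1) hi (n - 2 - i) (by omega) (by omega)]
        exact h2
      · rw [← mul_revPerm_apply n π (i + 1) hi (n - 2 - i) (by omega) (by omega),
            ← mul_revPerm_apply n π i (Nat.lt_of_succ_lt hi) (n - 2 - i + 1) (by omega) (by omega)]
        exact h3
    · rintro ⟨a, b, ⟨ha, hb, h1, h2, h3⟩, hia, hjb⟩
      have hia' : i = n - 2 - b := hia.symm
      have hjb' : j = n - 1 - a := hjb.symm
      subst hia' hjb'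
      refine ⟨by omega, by omega, by omega, ?_, ?_⟩
      · rw [mul_revPerm_apply n π (n - 1 - a) (by omega) a ha (by omega),
            mul_revPerm_apply n π (n - 2 - b + 1) (by omega) b (Nat.lt_of_succ_lt hb) (by omega)]
        exact h2
      · rw [mul_revPerm_apply n π (n - 2 - b + 1) (by omega) b (Nat.lt_of_succ_lt hb) (by omega),
            mul_revPerm_apply n π (n - 2 - b) (by omega) (b + 1) hb (by omega)]
        exact h3
  rw [hset, Set.ncard_image_of_injOn]
  rintro ⟨a, b⟩ ⟨ha, hb, h1, -⟩ ⟨c, d⟩ ⟨hc, hd, h2, -⟩ h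
  simp only [Prod.mk.injEq] at h ⊢
  omega

lemma revPerm_sq (n : ℕ) :
    (Fin.revPerm : Equiv.Perm (Fin n)) * Fin.revPerm = 1 := by
  ext x
  simp

/-- The four pattern statistics (a-bc), (c-ba), (ab-c), (cb-a) are equidistributed
over `S_n`. -/
theorem equidistributed_class_one (n m : ℕ) :
    {π : Equiv.Perm (Fin n) | cntAdBC n π = m}.ncard =
      {π : Equiv.Perm (Fin n) | cntCdBA n π = m}.ncard ∧
    {π : Equiv.Perm (Fin n) | cntAdBC n π = m}.ncard =
      {π : Equiv.Perm (Fin n) | cntABdC n π = m}.ncard ∧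
    {π : Equiv.Perm (Fin n) | cntAdBC n π = m}.ncard =
      {π : Equiv.Perm (Fin n) | cntCBdA n π = m}.ncard := by
  have hsq := revPerm_sq n
  refine ⟨?_, ?_, ?_⟩
  · have hset : {π : Equiv.Perm (Fin n) | cntCdBA n π = m}
        = (fun ρ => (Fin.revPerm : Equiv.Perm (Fin n)) * ρ) ''
          {π | cntAdBC n π = m} := by
      ext π
      simp only [Set.mem_setOf_eq, Set.mem_image]
      constructor
      · intro h
        refine ⟨Fin.revPerm * π, ?_, by rw [← mul_assoc, hsq, one_mul]⟩
        rw [← cntCdBA_revPerm_mul, ← mul_assoc, hsq, one_mul]; exact h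
      · rintro ⟨ρ, hρ, rfl⟩
        rw [cntCdBA_revPerm_mul]; exact hρ
    rw [hset, Set.ncard_image_of_injective _ (mul_right_injective _)]
  · have cancel : ∀ σ : Equiv.Perm (Fin n),
        Fin.revPerm * (Fin.revPerm * σ * Fin.revPerm) * Fin.revPerm = σ := by
      intro σ
      rw [← mul_assoc, ← mul_assoc, hsq, one_mul, mul_assoc, hsq, mul_one]
    have hset : {π : Equiv.Perm (Fin n) | cntABdC n π = m}
        = (fun ρ => (Fin.revPerm : Equiv.Perm (Fin n)) * ρ *
            (Fin.revPerm : Equiv.Perm (Fin n))) ''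
          {π | cntAdBC n π = m} := by
      ext π
      simp only [Set.mem_setOf_eq, Set.mem_image]
      constructor
      · intro h
        refine ⟨Fin.revPerm * π * Fin.revPerm, ?_, cancel π⟩
        rw [← cntCBdA_mul_revPerm, ← cntABdC_revPerm_mul, mul_assoc, mul_assoc, hsq,
          mul_one, ← mul_assoc, hsq, one_mul]
        exact h
      · rintro ⟨ρ, hρ, rfl⟩
        rw [mul_assoc, cntABdC_revPerm_mul, cntCBdA_mul_revPerm]; exact hρ
    rw [hset, Set.ncard_image_of_injective]
    intro a b hab
    simp only at hab
    have := congrArg (fun x => (Fin.revPerm : Equiv.Perm (Fin n)) * x * Fin.revPerm) hab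
    simpa only [cancel] using this
  · have hset : {π : Equiv.Perm (Fin n) | cntCBdA n π = m}
        = (fun ρ => ρ * (Fin.revPerm : Equiv.Perm (Fin n))) ''
          {π | cntAdBC n π = m} := by
      ext π
      simp only [Set.mem_setOf_eq, Set.mem_image]
      constructor
      · intro h
        refine ⟨π * Fin.revPerm, ?_, by rw [mul_assoc, hsq, mul_one]⟩
        rw [← cntCBdA_mul_revPerm, mul_assoc, hsq, mul_one]; exact h
      · rintro ⟨ρ, hρ, rfl⟩
        rw [cntCBdA_mul_revPerm]; exact hρ
    rw [hset, Set.ncard_image_of_injective _ (mul_left_injective _)]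
end

section
/- For every n ≥ 0, the number of (a-bc)-avoiding permutations of [n] equals the number of set partitions of [n] (the n-th Bell number B_n). -/
/-!
Both numbers satisfy the recurrence `f(S) = ∑_{D ⊆ S \ {m}} f(S \ ({m} ∪ D))` with `m = min S`.
An (a-bc)-avoiding word on the letters `S` is `w ++ m :: t`, where `t` is decreasing (an ascent
in `t` would complete an occurrence with `a = m`) and `w` is any avoiding word: since `m` is
smaller than every other letter it can play neither the role of `b` nor that of `c`. Taking
`D` to be the letters of `t`, this matches a set partition of `S`, i.e. the block `{m} ∪ D`
together with a set partition of the rest.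
-/

/-- `π` avoids the pattern (a-bc): there are no (0-based) indices `i < j` with
`j + 1 < n` and `π i < π j < π (j+1)`. -/
def AvoidsAdBC (n : ℕ) (π : Equiv.Perm (Fin n)) : Prop :=
  ∀ (i j : ℕ) (hi : i < n) (hj : j + 1 < n), i < j →
    ¬ (π ⟨i, hi⟩ < π ⟨j, Nat.lt_of_succ_lt hj⟩ ∧
       π ⟨j, Nat.lt_of_succ_lt hj⟩ < π ⟨j + 1, hj⟩)

/-- `P` is a set partition of `{1, …, n}` (realised as `Fin n`): a family of
pairwise disjoint non-empty subsets whose union is everything. -/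
def IsSetPartition (n : ℕ) (P : Finset (Finset (Fin n))) : Prop :=
  (∀ A ∈ P, A.Nonempty) ∧
  (∀ A ∈ P, ∀ B ∈ P, A ≠ B → Disjoint A B) ∧
  (∀ x : Fin n, ∃ A ∈ P, x ∈ A)

open Finset

variable {α : Type*}

namespace List
variable [LinearOrder α]

def AvoidsAdBC (l : List α) : Prop :=
  ∀ i j (_ : i < j) (hj : j + 1 < l.length), ¬ (l[i] < l[j] ∧ l[j] < l[j + 1])

theorem avoidsAdBC_append_cons_iff {l t : List α} {m : α} (hm : ∀ x ∈ l ++ t, m < x) :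
    (l ++ m :: t).AvoidsAdBC ↔ l.AvoidsAdBC ∧ t.SortedGE := by
  constructor
  · intro h
    constructor
    · intro i j hij hj hpat
      refine h i j hij (by simp; omega) ?_
      grind
    · rw [sortedGE_iff_isChain, isChain_iff_getElem]
      intro k hk
      by_contra hlt
      refine h l.length (l.length + 1 + k) (by omega) (by simp; omega) ?_
      have := hm t[k] (mem_append_right _ (getElem_mem _))
      grind
  · rintro ⟨hl, ht⟩ i j hij hj ⟨hij', hjj⟩
    simp only [getElem_append, getElem_cons] at hij' hjj
    -- the ascent `b c` lies in `l`, ends at `m`, starts at `m`, or lies in `t`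
    split_ifs at hij' hjj <;> first
      | omega
      | exact hl i j hij ‹_› ⟨hij', hjj⟩
      | exact lt_irrefl m hjj
      | exact (hm _ (by simp)).asymm hij'
      | exact (hm _ (by simp)).asymm hjj
      | exact (ht.getElem_ge_getElem_of_le (by omega)).not_gt hjj

theorem avoidsAdBC_ofFn_iff {n : ℕ} (π : Equiv.Perm (Fin n)) :
    (ofFn π).AvoidsAdBC ↔ _root_.AvoidsAdBC n π := by
  simp only [AvoidsAdBC, _root_.AvoidsAdBC, length_ofFn, List.getElem_ofFn]
  exact ⟨fun h i j hi hj hij => h i j hij hj, fun h i j hij hj => h i j (by omega) hj hij⟩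

end List

theorem Equiv.Perm.exists_ofFn_eq {n : ℕ} {l : List (Fin n)} (hnd : l.Nodup)
    (hl : l.toFinset = univ) : ∃ π : Equiv.Perm (Fin n), List.ofFn π = l := by
  have hmem : ∀ x, x ∈ l := fun x => List.mem_toFinset.mp (hl ▸ mem_univ x)
  have hlen : l.length = n := by
    rw [← List.toFinset_card_of_nodup hnd, hl, card_univ, Fintype.card_fin]
  refine ⟨(finCongr hlen.symm).trans (hnd.getEquivOfForallMemList l hmem), ?_⟩
  refine List.ext_getElem (by simp [hlen]) fun i _ _ => ?_
  simp

section Avoiders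
variable [LinearOrder α]

open scoped Classical in
noncomputable def avoiders (S : Finset α) : Finset (List α) :=
  S.toList.permutations.toFinset.filter List.AvoidsAdBC

theorem mem_avoiders {S : Finset α} {l : List α} :
    l ∈ avoiders S ↔ l.Nodup ∧ l.toFinset = S ∧ l.AvoidsAdBC := by
  classical
  rw [avoiders, mem_filter, List.mem_toFinset, List.mem_permutations, ← and_assoc]
  refine and_congr_left fun _ => ⟨fun h => ⟨h.nodup_iff.mpr S.nodup_toList, ?_⟩, fun h => ?_⟩
  · rw [List.toFinset_eq_of_perm _ _ h, toList_toFinset]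
  · exact List.perm_of_nodup_nodup_toFinset_eq h.1 S.nodup_toList (by rw [h.2, toList_toFinset])

theorem avoiders_empty : avoiders (∅ : Finset α) = {[]} := by
  ext l
  rw [mem_avoiders, mem_singleton, List.toFinset_eq_empty_iff]
  exact ⟨fun h => h.2.1, by rintro rfl; exact ⟨List.nodup_nil, rfl, fun _ _ _ hj => by simp at hj⟩⟩

theorem append_cons_sort_mem_avoiders {m : α} {T D : Finset α} {l : List α}
    (hm : ∀ x ∈ T, m < x) (hD : D ⊆ T) (hl : l ∈ avoiders (T \ D)) :
    l ++ m :: D.sort (· ≥ ·) ∈ avoiders (insert m T) := by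
  obtain ⟨hnd, hlT, hav⟩ := mem_avoiders.mp hl
  have hmem : ∀ x, x ∈ l ↔ x ∈ T ∧ x ∉ D := fun x => by
    rw [← List.mem_toFinset, hlT, mem_sdiff]
  have hmT : m ∉ T := fun h => lt_irrefl m (hm m h)
  refine mem_avoiders.mpr ⟨?_, ?_,
    (List.avoidsAdBC_append_cons_iff ?_).mpr ⟨hav, (sortedGT_sort D).sortedGE⟩⟩
  · rw [List.nodup_middle, List.nodup_cons, List.nodup_append]
    grind [mem_sort, sort_nodup]
  · ext x
    simp only [List.toFinset_append, List.toFinset_cons, sort_toFinset, hlT]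
    grind
  · grind [mem_sort]

theorem exists_append_cons_sort_eq_of_mem_avoiders_insert {m : α} {T : Finset α} {l : List α}
    (hm : ∀ x ∈ T, m < x) (hl : l ∈ avoiders (insert m T)) :
    ∃ D ⊆ T, ∃ w ∈ avoiders (T \ D), w ++ m :: D.sort (· ≥ ·) = l := by
  have hmT : m ∉ T := fun h => lt_irrefl m (hm m h)
  obtain ⟨hnd, hlS, hav⟩ := mem_avoiders.mp hl
  have hmem : ∀ x, x ∈ l ↔ x = m ∨ x ∈ T := fun x => by
    rw [← List.mem_toFinset, hlS, mem_insert]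
  obtain ⟨w, t, rfl⟩ := List.mem_iff_append.mp ((hmem m).mpr (Or.inl rfl))
  have hnd' := List.nodup_middle.mp hnd
  rw [List.nodup_cons, List.nodup_append] at hnd'
  obtain ⟨hm_wt, hw_nd, ht_nd, hwt_disj⟩ := hnd'
  have hT : ∀ x ∈ w ++ t, x ∈ T := by grind
  obtain ⟨hw, ht⟩ := (List.avoidsAdBC_append_cons_iff fun x hx => hm x (hT x hx)).mp hav
  refine ⟨t.toFinset, fun x hx => hT x (List.mem_append_right w (List.mem_toFinset.mp hx)), w,
    mem_avoiders.mpr ⟨hw_nd, ?_, hw⟩, ?_⟩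
  · ext x
    simp only [List.mem_toFinset, mem_sdiff]
    grind
  · rw [(List.toFinset_sort (· ≥ ·) ht_nd).mpr ht.pairwise]

theorem card_avoiders_insert {m : α} {T : Finset α} (hm : ∀ x ∈ T, m < x) :
    #(avoiders (insert m T)) = ∑ D ∈ T.powerset, #(avoiders (T \ D)) := by
  have hmT : m ∉ T := fun h => lt_irrefl m (hm m h)
  rw [← card_sigma]
  symm
  refine card_bij (fun p _ => p.2 ++ m :: p.1.sort (· ≥ ·)) (fun p hp => ?_) ?_ (fun l hl => ?_)
  · obtain ⟨hD, hl⟩ := mem_sigma.mp hp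
    exact append_cons_sort_mem_avoiders hm (mem_powerset.mp hD) hl
  · rintro ⟨D, l⟩ hDl ⟨D', l'⟩ - he
    obtain ⟨hD, hl⟩ := mem_sigma.mp hDl
    have hml : m ∉ l := fun h =>
      hmT (mem_sdiff.mp ((mem_avoiders.mp hl).2.1 ▸ List.mem_toFinset.mpr h)).1
    have hmD : m ∉ D.sort (· ≥ ·) := fun h => hmT (mem_powerset.mp hD ((mem_sort _).mp h))
    obtain ⟨rfl, -, hDD'⟩ := (List.append_cons_inj_of_notMem hml hmD).mp he
    have : D = D' := by simpa only [sort_toFinset] using congrArg List.toFinset hDD'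
    rw [this]
  · obtain ⟨D, hD, w, hw, rfl⟩ := exists_append_cons_sort_eq_of_mem_avoiders_insert hm hl
    exact ⟨⟨D, w⟩, mem_sigma.mpr ⟨mem_powerset.mpr hD, hw⟩, rfl⟩

end Avoiders

structure IsSetPartitionOf (S : Finset α) (P : Finset (Finset α)) : Prop where
  nonempty : ∀ A ∈ P, A.Nonempty
  disjoint : ∀ A ∈ P, ∀ B ∈ P, A ≠ B → Disjoint A B
  mem_iff : ∀ x, x ∈ S ↔ ∃ A ∈ P, x ∈ A

namespace IsSetPartitionOf
variable {S : Finset α} {P : Finset (Finset α)}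

theorem subset (hP : IsSetPartitionOf S P) {A : Finset α} (hA : A ∈ P) : A ⊆ S :=
  fun x hx => (hP.mem_iff x).mpr ⟨A, hA, hx⟩

theorem insert_block [DecidableEq α] (hP : IsSetPartitionOf S P) {B : Finset α}
    (hB : B.Nonempty) (hBS : Disjoint B S) : IsSetPartitionOf (B ∪ S) (insert B P) where
  nonempty := by
    simp only [mem_insert, forall_eq_or_imp]
    exact ⟨hB, hP.nonempty⟩
  disjoint := by
    have hBA : ∀ A ∈ P, Disjoint B A := fun A hA => hBS.mono_right (hP.subset hA)
    simp only [mem_insert, forall_eq_or_imp]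
    exact ⟨⟨fun h => (h rfl).elim, fun A hA _ => hBA A hA⟩,
      fun A hA => ⟨fun _ => (hBA A hA).symm, hP.disjoint A hA⟩⟩
  mem_iff x := by
    simp only [mem_union, exists_mem_insert, hP.mem_iff]

theorem erase_block [DecidableEq α] (hP : IsSetPartitionOf S P) {B : Finset α} (hB : B ∈ P) :
    IsSetPartitionOf (S \ B) (P.erase B) where
  nonempty A hA := hP.nonempty A (mem_of_mem_erase hA)
  disjoint A hA A' hA' := hP.disjoint A (mem_of_mem_erase hA) A' (mem_of_mem_erase hA')
  mem_iff x := by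
    rw [mem_sdiff, hP.mem_iff]
    constructor
    · rintro ⟨⟨A, hA, hxA⟩, hxB⟩
      exact ⟨A, mem_erase.mpr ⟨by rintro rfl; exact hxB hxA, hA⟩, hxA⟩
    · rintro ⟨A, hA, hxA⟩
      obtain ⟨hAB, hA⟩ := mem_erase.mp hA
      exact ⟨⟨A, hA, hxA⟩, disjoint_left.mp (hP.disjoint A hA B hB hAB) hxA⟩

end IsSetPartitionOf

open scoped Classical in
noncomputable def setPartitions (S : Finset α) : Finset (Finset (Finset α)) :=
  S.powerset.powerset.filter (IsSetPartitionOf S)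

theorem mem_setPartitions {S : Finset α} {P : Finset (Finset α)} :
    P ∈ setPartitions S ↔ IsSetPartitionOf S P := by
  classical
  rw [setPartitions, mem_filter, mem_powerset, and_iff_right_iff_imp]
  exact fun hP A hA => mem_powerset.mpr (hP.subset hA)

theorem setPartitions_empty : setPartitions (∅ : Finset α) = {∅} := by
  ext P
  rw [mem_setPartitions, mem_singleton]
  refine ⟨fun hP => eq_empty_of_forall_notMem fun A hA => ?_, ?_⟩
  · obtain ⟨x, hx⟩ := hP.nonempty A hA
    exact notMem_empty x (hP.subset hA hx)
  · rintro rfl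
    exact ⟨by simp, by simp, by simp⟩

theorem exists_insert_insert_eq_of_mem_setPartitions_insert [DecidableEq α] {m : α}
    {T : Finset α} {Q : Finset (Finset α)} (hmT : m ∉ T) (hQ : Q ∈ setPartitions (insert m T)) :
    ∃ D ⊆ T, ∃ P ∈ setPartitions (T \ D), insert (insert m D) P = Q := by
  rw [mem_setPartitions] at hQ
  obtain ⟨B, hB, hmB⟩ := (hQ.mem_iff m).mp (mem_insert_self m T)
  have hBT : B.erase m ⊆ T := fun x hx => by
    obtain ⟨hxm, hxB⟩ := mem_erase.mp hx
    exact (mem_insert.mp (hQ.subset hB hxB)).resolve_left hxm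
  have hTB : insert m T \ B = T \ B.erase m := by
    ext x
    simp only [mem_sdiff, mem_insert, mem_erase]
    grind
  refine ⟨B.erase m, hBT, Q.erase B, mem_setPartitions.mpr (hTB ▸ hQ.erase_block hB), ?_⟩
  rw [insert_erase hmB, insert_erase hB]

theorem card_setPartitions_insert [DecidableEq α] {m : α} {T : Finset α} (hmT : m ∉ T) :
    #(setPartitions (insert m T)) = ∑ D ∈ T.powerset, #(setPartitions (T \ D)) := by
  have hm_notMem : ∀ {D P}, P ∈ setPartitions (T \ D) → ∀ A ∈ P, m ∉ A :=
    fun hP A hA hmA => hmT (mem_sdiff.mp ((mem_setPartitions.mp hP).subset hA hmA)).1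
  rw [← card_sigma]
  symm
  refine card_bij (fun p _ => insert (insert m p.1) p.2) (fun p hp => ?_) ?_ (fun Q hQ => ?_)
  · obtain ⟨hD, hP⟩ := mem_sigma.mp hp
    have hdisj : Disjoint (insert m p.1) (T \ p.1) :=
      disjoint_insert_left.mpr ⟨fun h => hmT (mem_sdiff.mp h).1, disjoint_sdiff⟩
    rw [mem_setPartitions] at hP ⊢
    simpa only [insert_union, union_sdiff_of_subset (mem_powerset.mp hD)]
      using hP.insert_block (insert_nonempty m p.1) hdisj
  · rintro ⟨D, P⟩ hDP ⟨D', P'⟩ hDP' he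
    obtain ⟨hD, hP⟩ := mem_sigma.mp hDP
    obtain ⟨hD', hP'⟩ := mem_sigma.mp hDP'
    have hBP : insert m D ∉ P := fun h => hm_notMem hP _ h (mem_insert_self m D)
    have hBP' : insert m D' ∉ P' := fun h => hm_notMem hP' _ h (mem_insert_self m D')
    have hB : insert m D = insert m D' :=
      (mem_insert.mp (he ▸ mem_insert_self _ P)).resolve_right
        fun h => hm_notMem hP' _ h (mem_insert_self m D)
    have hDD' : D = D' := by
      simpa only [erase_insert fun h => hmT (mem_powerset.mp hD h),
        erase_insert fun h => hmT (mem_powerset.mp hD' h)] using congrArg (·.erase m) hB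
    have hPP' : P = P' := by
      rw [hB] at he hBP
      simpa only [erase_insert hBP, erase_insert hBP'] using congrArg (·.erase (insert m D')) he
    rw [hDD', hPP']
  · obtain ⟨D, hD, P, hP, rfl⟩ := exists_insert_insert_eq_of_mem_setPartitions_insert hmT hQ
    exact ⟨⟨D, P⟩, mem_sigma.mpr ⟨mem_powerset.mpr hD, hP⟩, rfl⟩

theorem card_avoiders_eq_card_setPartitions [LinearOrder α] (S : Finset α) :
    #(avoiders S) = #(setPartitions S) := by
  induction S using Finset.strongInduction with
  | H S ih =>
  rcases S.eq_empty_or_nonempty with rfl | hS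
  · rw [avoiders_empty, setPartitions_empty, card_singleton, card_singleton]
  · have hmS := S.min'_mem hS
    rw [← insert_erase hmS, card_avoiders_insert fun x => S.min'_lt_of_mem_erase_min' hS,
      card_setPartitions_insert (notMem_erase _ S)]
    exact sum_congr rfl fun D _ => ih _ (sdiff_subset.trans_ssubset (erase_ssubset hmS))

theorem ncard_setOf_avoidsAdBC (n : ℕ) :
    {π : Equiv.Perm (Fin n) | AvoidsAdBC n π}.ncard = #(avoiders (univ : Finset (Fin n))) := by
  rw [← Set.ncard_coe_finset]
  refine Set.ncard_congr (fun π _ => List.ofFn π) (fun π hπ => ?_)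
    (fun π σ _ _ h => Equiv.ext (congrFun (List.ofFn_injective h))) (fun l hl => ?_)
  · rw [mem_coe, mem_avoiders, List.avoidsAdBC_ofFn_iff]
    exact ⟨List.nodup_ofFn.mpr π.injective, by ext x; simpa using π.surjective x, hπ⟩
  · obtain ⟨hnd, huniv, hav⟩ := mem_avoiders.mp hl
    obtain ⟨π, rfl⟩ := Equiv.Perm.exists_ofFn_eq hnd huniv
    exact ⟨π, (List.avoidsAdBC_ofFn_iff π).mp hav, rfl⟩

theorem ncard_setOf_isSetPartition (n : ℕ) :
    {P : Finset (Finset (Fin n)) | IsSetPartition n P}.ncard =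
      #(setPartitions (univ : Finset (Fin n))) := by
  rw [← Set.ncard_coe_finset]
  congr 1
  ext P
  rw [Set.mem_ofPred_eq, mem_coe, mem_setPartitions]
  exact ⟨fun ⟨hne, hdisj, hcov⟩ => ⟨hne, hdisj, fun x => by simp [hcov x]⟩,
    fun hP => ⟨hP.nonempty, hP.disjoint, fun x => (hP.mem_iff x).mp (mem_univ x)⟩⟩

/-- The number of (a-bc)-avoiding permutations of `[n]` is the `n`-th Bell number,
i.e. the number of set partitions of `[n]`. -/
theorem avoid_adbc_eq_bell (n : ℕ) :
    {π : Equiv.Perm (Fin n) | AvoidsAdBC n π}.ncard =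
      {P : Finset (Finset (Fin n)) | IsSetPartition n P}.ncard := by
  rw [ncard_setOf_avoidsAdBC, ncard_setOf_isSetPartition, card_avoiders_eq_card_setPartitions]
end

section
/- For every n ≥ 0 and every k ≥ 0, the number of (a-bc)-avoiding permutations of [n] having exactly k left-to-right minima equals S(n,k), the number of set partitions of [n] into exactly k blocks. -/
/-- The number of left-to-right minima of `π`:
indices `i` such that `π i < π j` for all `j < i`. -/
noncomputable def ltrMin (n : ℕ) (π : Equiv.Perm (Fin n)) : ℕ :=
  {i : Fin n | ∀ j : Fin n, j < i → π i < π j}.ncard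

/-!
If `π` avoids (a-bc), every ascent `π j < π (j + 1)` starts at a left-to-right minimum.
Cutting the word before each left-to-right minimum, every segment is therefore its minimum
followed by its other entries in decreasing order, and the segment minima decrease from left to
right. So `π` is the reading word of the set partition of values into segments: the blocks in
decreasing order of their minima, each block read as its minimum followed by its other elements
in decreasing order. Conversely the reading word of any set partition avoids (a-bc), its segments
are the blocks, and its left-to-right minima are the block minima.

A set partition is encoded by the map sending each element to the minimum of its block; for the
segments of `π` this is the map sending a value to the least value at or before its position.
-/

open Finset Function

section StrictMonoComp

variable {β : Type*} [LinearOrder β] {n : ℕ} {f : Fin n → β}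

theorem exists_perm_strictMono_comp (hf : Injective f) :
    ∃ π : Equiv.Perm (Fin n), StrictMono (f ∘ π) := by
  classical
  have hcard : (univ.image f).card = n := by rw [card_image_of_injective _ hf, card_fin]
  set g := (univ.image f).orderEmbOfFin hcard
  have hg : ∀ i, ∃ v, f v = g i := fun i => by
    obtain ⟨v, -, hv⟩ := mem_image.1 ((univ.image f).orderEmbOfFin_mem hcard i)
    exact ⟨v, hv⟩
  choose π hπ using hg
  have hπinj : Injective π := fun i j h => g.injective (by rw [← hπ, ← hπ, h])
  refine ⟨Equiv.ofBijective π hπinj.bijective_of_finite, fun i j hij => ?_⟩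
  simpa only [comp_apply, Equiv.ofBijective_apply, hπ] using g.strictMono hij

theorem Equiv.Perm.eq_of_strictMono_comp (hf : Injective f) {π σ : Equiv.Perm (Fin n)}
    (hπ : StrictMono (f ∘ π)) (hσ : StrictMono (f ∘ σ)) : π = σ := by
  classical
  have hcard : (univ.image f).card = n := by rw [card_image_of_injective _ hf, card_fin]
  have hrange : ∀ τ : Equiv.Perm (Fin n), ∀ i, (f ∘ τ) i ∈ univ.image f :=
    fun τ i => mem_image_of_mem f (mem_univ _)
  have h := (orderEmbOfFin_unique hcard (hrange π) hπ).trans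
    (orderEmbOfFin_unique hcard (hrange σ) hσ).symm
  exact Equiv.ext fun i => hf (congrFun h i)

end StrictMonoComp

section Fibers

variable {α β : Type*} [Fintype α] [DecidableEq α] [DecidableEq β]

def fibers (f : α → β) : Finset (Finset α) :=
  univ.image fun a => univ.filter fun b => f b = f a

theorem mem_fibers {f : α → β} {A : Finset α} :
    A ∈ fibers f ↔ ∃ a, A = univ.filter fun b => f b = f a := by
  simp [fibers, eq_comm]

theorem card_fibers (f : α → β) : (fibers f).card = (univ.image f).card := by
  have h : fibers f = (univ.image f).image fun y => univ.filter fun b => f b = y := by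
    rw [fibers, image_image]; rfl
  rw [h, card_image_of_injOn]
  intro y hy z _ hyz
  obtain ⟨a, -, rfl⟩ := mem_image.1 hy
  have ha : a ∈ univ.filter fun b => f b = f a := by simp
  simpa [hyz] using ha

theorem isSetPartition_fibers {n : ℕ} (f : Fin n → β) : IsSetPartition n (fibers f) := by
  refine ⟨?_, ?_, fun x => ⟨_, mem_fibers.2 ⟨x, rfl⟩, by simp⟩⟩
  · rintro A hA
    obtain ⟨a, rfl⟩ := mem_fibers.1 hA
    exact ⟨a, by simp⟩
  · rintro A hA B hB hAB
    obtain ⟨a, rfl⟩ := mem_fibers.1 hA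
    obtain ⟨b, rfl⟩ := mem_fibers.1 hB
    refine disjoint_left.2 fun c hca hcb => hAB ?_
    simp only [mem_filter, mem_univ, true_and] at hca hcb
    simp only [← hca, hcb]

end Fibers

def IsBlockMinMap {α : Type*} [Preorder α] (m : α → α) : Prop :=
  (∀ a, m a ≤ a) ∧ ∀ a, m (m a) = m a

theorem IsBlockMinMap.eq_of_fibers_eq {α : Type*} [Fintype α] [DecidableEq α] [PartialOrder α]
    {m m' : α → α} (hm : IsBlockMinMap m) (hm' : IsBlockMinMap m') (h : fibers m = fibers m') :
    m = m' := by
  have hsame : ∀ a b, m b = m a ↔ m' b = m' a := by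
    intro a b
    obtain ⟨c, hc⟩ := mem_fibers.1 (h ▸ mem_fibers.2 ⟨a, rfl⟩)
    have hac : m' a = m' c := by
      have ha : a ∈ univ.filter fun b => m b = m a := by simp
      simpa [hc] using ha
    simpa [hac] using congrArg (b ∈ ·) hc
  funext a
  have h₁ : m' (m a) = m' a := (hsame a (m a)).1 (hm.2 a)
  have h₂ : m (m' a) = m a := (hsame a (m' a)).2 (hm'.2 a)
  exact le_antisymm (h₂ ▸ hm.1 (m' a)) (h₁ ▸ hm'.1 (m a))

theorem IsSetPartition.exists_isBlockMinMap_fibers_eq {n : ℕ} {P : Finset (Finset (Fin n))}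
    (hP : IsSetPartition n P) : ∃ m : Fin n → Fin n, IsBlockMinMap m ∧ fibers m = P := by
  have huniq : ∀ {A B x}, A ∈ P → B ∈ P → x ∈ A → x ∈ B → A = B :=
    fun hA hB hxA hxB => by_contra fun hne => disjoint_left.1 (hP.2.1 _ hA _ hB hne) hxA hxB
  choose A hAP hmem using hP.2.2
  let m v := (A v).min' ⟨v, hmem v⟩
  have hA : ∀ v w, w ∈ A v ↔ A w = A v :=
    fun v w => ⟨huniq (hAP w) (hAP v) (hmem w), fun h => h ▸ hmem w⟩
  have hmA : ∀ v, m v ∈ A v := fun v => min'_mem _ _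
  have hm : ∀ v w, m w = m v ↔ A w = A v := by
    refine fun v w => ⟨fun h => huniq (hAP w) (hAP v) (hmA w) (h ▸ hmA v),
      fun h => le_antisymm (min'_le _ _ ?_) (min'_le _ _ ?_)⟩
    · exact h ▸ hmA v
    · exact h ▸ hmA w
  have hfib : (fun v => univ.filter fun w => m w = m v) = A := by
    funext v; ext w; simp [hm, hA]
  have hmm : ∀ v, m (m v) = m v := fun v => (hm v (m v)).2 ((hA v _).1 (hmA v))
  refine ⟨m, ⟨fun v => min'_le _ _ (hmem v), hmm⟩, ?_⟩
  rw [fibers, hfib]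
  ext B
  simp only [mem_image, mem_univ, true_and]
  refine ⟨fun ⟨v, hv⟩ => hv ▸ hAP v, fun hB => ?_⟩
  obtain ⟨x, hx⟩ := hP.1 B hB
  exact ⟨x, huniq (hAP x) hB (hmem x) hx⟩

theorem bijOn_fibers (n k : ℕ) :
    Set.BijOn fibers {m : Fin n → Fin n | IsBlockMinMap m ∧ (univ.image m).card = k}
      {P | IsSetPartition n P ∧ P.card = k} := by
  refine ⟨fun m ⟨_, hk⟩ => ⟨isSetPartition_fibers m, (card_fibers m).trans hk⟩,
    fun m hm m' hm' h => hm.1.eq_of_fibers_eq hm'.1 h, fun P ⟨hP, hk⟩ => ?_⟩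
  obtain ⟨m, hm, rfl⟩ := hP.exists_isBlockMinMap_fibers_eq
  exact ⟨m, ⟨hm, (card_fibers m).symm.trans hk⟩, rfl⟩

namespace Equiv.Perm

variable {n : ℕ} (π : Equiv.Perm (Fin n)) {i j : Fin n}

def prefixMin (i : Fin n) : Fin n := (Iic i).inf' nonempty_Iic π

def minBefore (v : Fin n) : Fin n := π.prefixMin (π.symm v)

variable {π}

@[simp] theorem minBefore_apply (i : Fin n) : π.minBefore (π i) = π.prefixMin i := by
  simp [minBefore]

theorem prefixMin_le (h : j ≤ i) : π.prefixMin i ≤ π j := inf'_le _ (mem_Iic.2 h)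

theorem exists_apply_eq_prefixMin (i : Fin n) : ∃ j ≤ i, π j = π.prefixMin i := by
  obtain ⟨j, hj, h⟩ := exists_mem_eq_inf' (nonempty_Iic (a := i)) π
  exact ⟨j, mem_Iic.1 hj, h.symm⟩

theorem le_of_apply_eq_prefixMin (h : π j = π.prefixMin i) : j ≤ i := by
  obtain ⟨k, hk, hk'⟩ := exists_apply_eq_prefixMin (π := π) i
  exact π.injective (h.trans hk'.symm) ▸ hk

theorem prefixMin_anti : Antitone π.prefixMin :=
  fun _ _ h => le_inf' _ _ fun _ hk => prefixMin_le ((mem_Iic.1 hk).trans h)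

theorem prefixMin_eq_of_apply_eq_prefixMin (h : π j = π.prefixMin i) : π.prefixMin j = π j :=
  le_antisymm (prefixMin_le le_rfl) (h ▸ prefixMin_anti (le_of_apply_eq_prefixMin h))

theorem prefixMin_eq_self_iff : π.prefixMin i = π i ↔ ∀ j < i, π i < π j := by
  refine ⟨fun h j hj => lt_of_le_of_ne (h ▸ prefixMin_le hj.le) (π.injective.ne hj.ne'),
    fun h => ?_⟩
  refine le_antisymm (prefixMin_le le_rfl) (le_inf' _ _ fun j hj => ?_)
  rcases (mem_Iic.1 hj).lt_or_eq with hji | rfl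
  exacts [(h j hji).le, le_rfl]

theorem isBlockMinMap_minBefore (π : Equiv.Perm (Fin n)) : IsBlockMinMap π.minBefore := by
  refine ⟨fun v => (prefixMin_le le_rfl).trans_eq (π.apply_symm_apply v), fun v => ?_⟩
  obtain ⟨j, -, hjv⟩ := exists_apply_eq_prefixMin (π := π) (π.symm v)
  rw [show π.minBefore v = π j from hjv.symm, minBefore_apply]
  exact prefixMin_eq_of_apply_eq_prefixMin hjv

theorem card_image_minBefore (π : Equiv.Perm (Fin n)) :
    (univ.image π.minBefore).card = ltrMin n π := by
  have himage :
      univ.image π.minBefore = (univ.filter fun i => π.prefixMin i = π i).image π := by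
    ext v
    simp only [mem_image, mem_univ, true_and, mem_filter]
    constructor
    · rintro ⟨w, rfl⟩
      obtain ⟨j, -, hjv⟩ := exists_apply_eq_prefixMin (π := π) (π.symm w)
      exact ⟨j, prefixMin_eq_of_apply_eq_prefixMin hjv, hjv⟩
    · rintro ⟨j, hj, rfl⟩
      exact ⟨π j, by rw [minBefore_apply, hj]⟩
  rw [himage, card_image_of_injective _ π.injective, ltrMin, ← Set.ncard_coe_finset]
  simp [prefixMin_eq_self_iff]

end Equiv.Perm

section ReadingKey

variable {n : ℕ} {m : Fin n → Fin n} {v w : Fin n}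

-- The blocks (fibers of `m`) come in decreasing order of their minima; within a block the
-- minimum comes first (`false < true`), then the other elements in decreasing order.
def readingKey (m : Fin n → Fin n) (v : Fin n) :
    Lex ((Fin n)ᵒᵈ × Lex (Bool × (Fin n)ᵒᵈ)) :=
  toLex (OrderDual.toDual (m v), toLex (decide (m v ≠ v), OrderDual.toDual v))

theorem readingKey_injective (m : Fin n → Fin n) : Injective (readingKey m) :=
  fun v w h => by simpa [readingKey] using congrArg (fun x => (ofLex (ofLex x).2).2) h

theorem readingKey_lt_readingKey_iff :
    readingKey m v < readingKey m w ↔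
      m w < m v ∨ m v = m w ∧ m w ≠ w ∧ (m v = v ∨ w < v) := by
  simp only [readingKey, Prod.Lex.toLex_lt_toLex, OrderDual.toDual_lt_toDual]
  by_cases hv : m v = v <;> by_cases hw : m w = w <;> simp [hv, hw]

theorem readingKey_lt_readingKey_of_lt (h : m w < m v) : readingKey m v < readingKey m w :=
  readingKey_lt_readingKey_iff.2 (Or.inl h)

theorem le_of_readingKey_le (h : readingKey m v ≤ readingKey m w) : m w ≤ m v := by
  rcases h.lt_or_eq with h | h
  · rcases readingKey_lt_readingKey_iff.1 h with h | ⟨h, -⟩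
    exacts [h.le, h.ge]
  · rw [readingKey_injective m h]

theorem IsBlockMinMap.readingKey_map_le (hm : IsBlockMinMap m) (v : Fin n) :
    readingKey m (m v) ≤ readingKey m v := by
  by_cases hv : m v = v
  · rw [hv]
  · exact (readingKey_lt_readingKey_iff.2 (Or.inr ⟨hm.2 v, hv, Or.inl (hm.2 v)⟩)).le

end ReadingKey

def IsReadingWord {n : ℕ} (m : Fin n → Fin n) (π : Equiv.Perm (Fin n)) : Prop :=
  StrictMono (readingKey m ∘ π)

namespace IsReadingWord

variable {n : ℕ} {m : Fin n → Fin n} {π : Equiv.Perm (Fin n)} {i j : Fin n}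

open Equiv.Perm

theorem map_apply_le (h : IsReadingWord m π) (hij : i ≤ j) : m (π j) ≤ m (π i) :=
  le_of_readingKey_le (h.monotone hij)

theorem minBefore_eq (hm : IsBlockMinMap m) (h : IsReadingWord m π) : π.minBefore = m := by
  funext v
  obtain ⟨i, rfl⟩ := π.surjective v
  rw [minBefore_apply]
  refine le_antisymm ?_ (le_inf' _ _ fun j hj => (h.map_apply_le (mem_Iic.1 hj)).trans (hm.1 _))
  obtain ⟨k, hk⟩ := π.surjective (m (π i))
  have hki : k ≤ i := h.le_iff_le.1 <| by
    simpa only [comp_apply, hk] using hm.readingKey_map_le (π i)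
  exact hk ▸ prefixMin_le hki

theorem map_apply_eq_of_lt_succ (hm : IsBlockMinMap m) (h : IsReadingWord m π) {j : ℕ}
    (hj : j + 1 < n) (hasc : π ⟨j, Nat.lt_of_succ_lt hj⟩ < π ⟨j + 1, hj⟩) :
    m (π ⟨j, Nat.lt_of_succ_lt hj⟩) = π ⟨j, Nat.lt_of_succ_lt hj⟩ := by
  set a : Fin n := ⟨j, Nat.lt_of_succ_lt hj⟩
  set b : Fin n := ⟨j + 1, hj⟩
  by_contra hne
  have hab : a < b := Fin.lt_def.2 (Nat.lt_succ_self j)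
  rcases readingKey_lt_readingKey_iff.1 (h hab) with hlt | ⟨-, -, hv | hv⟩
  · -- The minimum of the block of `π b` lies after `a` and not after `b`, so it is `π b`.
    obtain ⟨c, hc⟩ := π.surjective (m (π b))
    have hac : a < c := h.lt_iff_lt.1 <| by
      simpa only [comp_apply, hc] using readingKey_lt_readingKey_of_lt ((hm.2 _).trans_lt hlt)
    have hcb : c ≤ b := h.le_iff_le.1 <| by
      simpa only [comp_apply, hc] using hm.readingKey_map_le (π b)
    have hcb' : c = b := le_antisymm hcb (Fin.le_def.2 (Nat.succ_le_of_lt hac))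
    refine hasc.not_gt ?_
    calc π b = π c := by rw [hcb']
      _ = m (π b) := hc
      _ < m (π a) := hlt
      _ ≤ π a := hm.1 _
  · exact hne hv
  · exact hasc.not_gt hv

theorem avoidsAdBC (hm : IsBlockMinMap m) (h : IsReadingWord m π) : AvoidsAdBC n π :=
  fun i j hi hj hij ⟨h₁, h₂⟩ => h₁.not_ge <| by
    calc π ⟨j, _⟩ = m (π ⟨j, _⟩) := (h.map_apply_eq_of_lt_succ hm hj h₂).symm
      _ ≤ m (π ⟨i, hi⟩) := h.map_apply_le (Fin.le_def.2 hij.le)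
      _ ≤ π ⟨i, hi⟩ := hm.1 _

end IsReadingWord

namespace AvoidsAdBC

variable {n : ℕ} {π : Equiv.Perm (Fin n)} {i j : Fin n}

open Equiv.Perm

theorem apply_lt_of_prefixMin_eq (hπ : AvoidsAdBC n π) (hij : i < j)
    (heq : π.prefixMin j = π.prefixMin i) (hi : π.prefixMin i ≠ π i) : π j < π i := by
  -- No position from `i` to `j` is a left-to-right minimum, so each is followed by a descent.
  suffices h : ∀ t (ht : t < n), i.val ≤ t →
      π.prefixMin ⟨t, ht⟩ = π.prefixMin i → π ⟨t, ht⟩ ≤ π i from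
    (h j j.isLt hij.le heq).lt_of_ne (π.injective.ne hij.ne')
  intro t ht hit
  induction t, hit using Nat.le_induction with
  | base => exact fun _ => le_rfl
  | succ t hit ih =>
    intro heq'
    have ht' : t < n := by omega
    have heqt : π.prefixMin ⟨t, ht'⟩ = π.prefixMin i :=
      le_antisymm (prefixMin_anti (Fin.le_def.2 hit))
        (heq' ▸ prefixMin_anti (Fin.le_def.2 (Nat.le_succ t)))
    have hnot : π ⟨t, ht'⟩ ≠ π.prefixMin ⟨t, ht'⟩ := by
      intro h
      have hti : (⟨t, ht'⟩ : Fin n) = i :=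
        le_antisymm (le_of_apply_eq_prefixMin (h.trans heqt)) (Fin.le_def.2 hit)
      exact hi (hti ▸ h.trans heqt).symm
    obtain ⟨k, hkt, hk⟩ := exists_apply_eq_prefixMin (π := π) ⟨t, ht'⟩
    have hlt : π k < π ⟨t, ht'⟩ :=
      (hk.trans_le (prefixMin_le le_rfl)).lt_of_ne (hk.trans_ne hnot.symm)
    have hkt' : k.val < t := Fin.lt_def.1 (hkt.lt_of_ne fun h => hlt.ne (congrArg π h))
    have hasc := hπ k t k.isLt ht hkt'
    exact (not_lt.1 fun h => hasc ⟨hlt, h⟩).trans (ih ht' heqt)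


theorem isReadingWord_minBefore (hπ : AvoidsAdBC n π) : IsReadingWord π.minBefore π := by
  intro i j hij
  simp only [comp_apply, readingKey_lt_readingKey_iff, minBefore_apply]
  rcases (prefixMin_anti hij.le).lt_or_eq with hlt | heq
  · exact Or.inl hlt
  · have hj : π.prefixMin j ≠ π j := fun h =>
      hij.not_ge (le_of_apply_eq_prefixMin (h.symm.trans heq))
    exact Or.inr
      ⟨heq.symm, hj, or_iff_not_imp_left.2 (hπ.apply_lt_of_prefixMin_eq hij heq)⟩

end AvoidsAdBC

theorem bijOn_minBefore (n k : ℕ) :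
    Set.BijOn Equiv.Perm.minBefore
      {π : Equiv.Perm (Fin n) | AvoidsAdBC n π ∧ ltrMin n π = k}
      {m | IsBlockMinMap m ∧ (univ.image m).card = k} := by
  refine ⟨fun π ⟨_, hk⟩ => ⟨π.isBlockMinMap_minBefore, π.card_image_minBefore.trans hk⟩,
    fun π hπ σ hσ h => ?_, fun m ⟨hm, hk⟩ => ?_⟩
  · exact Equiv.Perm.eq_of_strictMono_comp (readingKey_injective _)
      hπ.1.isReadingWord_minBefore (h ▸ hσ.1.isReadingWord_minBefore)
  · obtain ⟨π, hπ⟩ : ∃ π, IsReadingWord m π :=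
      exists_perm_strictMono_comp (readingKey_injective m)
    have hmin := hπ.minBefore_eq hm
    exact ⟨π, ⟨hπ.avoidsAdBC hm, π.card_image_minBefore.symm.trans (hmin ▸ hk)⟩, hmin⟩

/-- The number of (a-bc)-avoiding permutations of `[n]` with exactly `k`
left-to-right minima is the Stirling number `S(n,k)`, the number of set
partitions of `[n]` into exactly `k` blocks. -/
theorem avoid_adbc_ltrmin_eq_stirling (n k : ℕ) :
    {π : Equiv.Perm (Fin n) | AvoidsAdBC n π ∧ ltrMin n π = k}.ncard =
      {P : Finset (Finset (Fin n)) | IsSetPartition n P ∧ P.card = k}.ncard :=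
  ((bijOn_fibers n k).comp (bijOn_minBefore n k)).ncard_eq
end

section
/- For every n ≥ 0, the number of (a-cb)-avoiding permutations of [n] equals the number of set partitions of [n] (the n-th Bell number B_n). -/
/-- `π` avoids the pattern (a-cb): there are no (0-based) indices `i < j` with
`j + 1 < n` and `π i < π (j+1) < π j`. -/
def AvoidsAdCB (n : ℕ) (π : Equiv.Perm (Fin n)) : Prop :=
  ∀ (i j : ℕ) (hi : i < n) (hj : j + 1 < n), i < j →
    ¬ (π ⟨i, hi⟩ < π ⟨j + 1, hj⟩ ∧
       π ⟨j + 1, hj⟩ < π ⟨j, Nat.lt_of_succ_lt hj⟩)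

set_option maxHeartbeats 1000000
namespace AdCBProof
variable {n : ℕ}

/-- Sorting key: values sorted by decreasing `μ v`, then increasing `v`. -/
def key (μ : Fin n → Fin n) (v : Fin n) : ℕ := (n - (μ v : ℕ)) * n + (v : ℕ)

lemma key_inj {μ : Fin n → Fin n} {v w : Fin n} (h : key μ v = key μ w) : v = w := by
  have hv := v.isLt
  have hw := w.isLt
  have h1 : key μ v % n = (v : ℕ) := by
    rw [key, Nat.add_comm, Nat.add_mul_mod_self_right]
    exact Nat.mod_eq_of_lt hv
  have h2 : key μ w % n = (w : ℕ) := by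
    rw [key, Nat.add_comm, Nat.add_mul_mod_self_right]
    exact Nat.mod_eq_of_lt hw
  exact Fin.ext (by rw [← h1, ← h2, h])

lemma key_lt_of_mu_lt {μ : Fin n → Fin n} {v w : Fin n} (h : (μ w : ℕ) < μ v) :
    key μ v < key μ w := by
  have hv := v.isLt
  have hmv := (μ v).isLt
  calc key μ v < (n - (μ v : ℕ)) * n + n := by unfold key; omega
    _ = (n - (μ v : ℕ) + 1) * n := by ring
    _ ≤ (n - (μ w : ℕ)) * n := Nat.mul_le_mul_right _ (by omega)
    _ ≤ key μ w := Nat.le_add_right _ _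

lemma mu_le_of_key_le {μ : Fin n → Fin n} {v w : Fin n} (h : key μ v ≤ key μ w) :
    (μ w : ℕ) ≤ μ v := by
  by_contra h'
  exact absurd h (not_le.mpr (key_lt_of_mu_lt (not_le.mp h')))

lemma key_lt_of_mu_eq {μ : Fin n → Fin n} {v w : Fin n} (hm : (μ v : ℕ) = μ w)
    (hvw : (v : ℕ) < w) : key μ v < key μ w := by
  unfold key; rw [hm]; omega

def rankSet (μ : Fin n → Fin n) (v : Fin n) : Finset (Fin n) :=
  Finset.univ.filter fun w => key μ w < key μ v

lemma rank_lt (μ : Fin n → Fin n) (v : Fin n) : (rankSet μ v).card < n := by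
  have hv : v ∉ rankSet μ v := by simp [rankSet]
  have hss : rankSet μ v ⊂ Finset.univ :=
    ⟨Finset.subset_univ _, fun h => hv (h (Finset.mem_univ v))⟩
  simpa using Finset.card_lt_card hss

def rank (μ : Fin n → Fin n) (v : Fin n) : Fin n := ⟨(rankSet μ v).card, rank_lt μ v⟩

lemma rank_lt_rank {μ : Fin n → Fin n} {v w : Fin n} (h : key μ v < key μ w) :
    rank μ v < rank μ w := by
  have hsub : rankSet μ v ⊆ rankSet μ w := by
    intro x hx
    simp only [rankSet, Finset.mem_filter, Finset.mem_univ, true_and] at *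
    omega
  have hv : v ∈ rankSet μ w := by simp [rankSet, h]
  have hv' : v ∉ rankSet μ v := by simp [rankSet]
  exact Finset.card_lt_card ⟨hsub, fun hc => hv' (hc hv)⟩

lemma rank_injective (μ : Fin n → Fin n) : Function.Injective (rank μ) := by
  intro v w h
  by_contra hne
  have hk : key μ v ≠ key μ w := fun hk => hne (key_inj hk)
  rcases lt_or_gt_of_ne hk with h1 | h1
  · exact absurd h (ne_of_lt (rank_lt_rank h1))
  · exact absurd h.symm (ne_of_lt (rank_lt_rank h1))

/-- The permutation whose word lists values sorted by `key μ`. -/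
noncomputable def permOf (μ : Fin n → Fin n) : Equiv.Perm (Fin n) :=
  (Equiv.ofBijective (rank μ) (Finite.injective_iff_bijective.mp (rank_injective μ))).symm

lemma rank_permOf (μ : Fin n → Fin n) (i : Fin n) : rank μ (permOf μ i) = i :=
  (Equiv.ofBijective (rank μ) (Finite.injective_iff_bijective.mp (rank_injective μ))).apply_symm_apply i

lemma sorted_permOf {μ : Fin n → Fin n} {i j : Fin n} (h : i < j) :
    key μ (permOf μ i) < key μ (permOf μ j) := by
  by_contra h'
  rcases eq_or_lt_of_le (not_lt.mp h') with h1 | h1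
  · have := key_inj h1.symm
    have : i = j := by rw [← rank_permOf μ i, ← rank_permOf μ j, this]
    omega
  · have := rank_lt_rank h1
    rw [rank_permOf, rank_permOf] at this
    exact absurd h (not_lt.mpr this.le)

lemma pos_lt_of_key_lt {μ : Fin n → Fin n} {x y : Fin n}
    (h : key μ (permOf μ x) < key μ (permOf μ y)) : x < y := by
  rcases lt_trichotomy x y with h1 | h1 | h1
  · exact h1
  · subst h1; omega
  · exact absurd (sorted_permOf h1) (not_lt.mpr h.le)

lemma eq_permOf_of_sorted (μ : Fin n → Fin n) (π : Equiv.Perm (Fin n))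
    (hs : ∀ i j : Fin n, i < j → key μ (π i) < key μ (π j)) : π = permOf μ := by
  have hrank : ∀ i : Fin n, rank μ (π i) = i := by
    intro i
    have hset : rankSet μ (π i) = Finset.image π (Finset.Iio i) := by
      ext w
      simp only [rankSet, Finset.mem_filter, Finset.mem_univ, true_and, Finset.mem_image,
        Finset.mem_Iio]
      constructor
      · intro hw
        refine ⟨π.symm w, ?_, π.apply_symm_apply w⟩
        rcases lt_trichotomy (π.symm w) i with h1 | h1 | h1
        · exact h1
        · exfalso
          have hw' : w = π i := by rw [← h1, π.apply_symm_apply]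
          rw [hw'] at hw
          omega
        · have := hs i (π.symm w) h1
          rw [π.apply_symm_apply] at this
          omega
      · rintro ⟨j, hj, rfl⟩
        exact hs j i hj
    have : rank μ (π i) = (⟨(i : ℕ), i.isLt⟩ : Fin n) := by
      apply Fin.ext
      show (rankSet μ (π i)).card = (i : ℕ)
      rw [hset, Finset.card_image_of_injective _ π.injective, Fin.card_Iio]
    simpa using this
  apply Equiv.ext
  intro i
  exact rank_injective μ ((hrank i).trans (rank_permOf μ i).symm)


/-- Minimum of the first `j+1` values of the word of `π`. -/
noncomputable def M (π : Equiv.Perm (Fin n)) (j : Fin n) : Fin n :=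
  ((Finset.Iic j).image π).min' ((Finset.nonempty_Iic).image π)

lemma M_le {π : Equiv.Perm (Fin n)} {q j : Fin n} (h : q ≤ j) : M π j ≤ π q :=
  Finset.min'_le _ _ (Finset.mem_image_of_mem π (Finset.mem_Iic.mpr h))

lemma M_attained (π : Equiv.Perm (Fin n)) (j : Fin n) : ∃ q, q ≤ j ∧ π q = M π j := by
  have := Finset.min'_mem ((Finset.Iic j).image π) ((Finset.nonempty_Iic).image π)
  rw [Finset.mem_image] at this
  obtain ⟨q, hq, hq'⟩ := this
  exact ⟨q, Finset.mem_Iic.mp hq, hq'⟩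

lemma M_anti {π : Equiv.Perm (Fin n)} {i j : Fin n} (h : i ≤ j) : M π j ≤ M π i := by
  obtain ⟨q, hq, hq'⟩ := M_attained π i
  rw [← hq']
  exact M_le (hq.trans h)

lemma le_M {π : Equiv.Perm (Fin n)} {j x : Fin n} (h : ∀ q, q ≤ j → x ≤ π q) : x ≤ M π j := by
  apply Finset.le_min'
  intro y hy
  rw [Finset.mem_image] at hy
  obtain ⟨q, hq, rfl⟩ := hy
  exact h q (Finset.mem_Iic.mp hq)

noncomputable def Hmu (π : Equiv.Perm (Fin n)) (v : Fin n) : Fin n := M π (π.symm v)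

lemma Hmu_le (π : Equiv.Perm (Fin n)) (v : Fin n) : Hmu π v ≤ v := by
  have := M_le (π := π) (le_refl (π.symm v))
  rwa [π.apply_symm_apply] at this

lemma Hmu_idem (π : Equiv.Perm (Fin n)) (v : Fin n) : Hmu π (Hmu π v) = Hmu π v := by
  obtain ⟨q, hq, hq'⟩ := M_attained π (π.symm v)
  have hsymm : π.symm (Hmu π v) = q := by rw [Hmu, ← hq', π.symm_apply_apply]
  show M π (π.symm (Hmu π v)) = Hmu π v
  rw [hsymm]
  apply le_antisymm
  · rw [Hmu, ← hq']; exact M_le le_rfl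
  · rw [Hmu]; exact M_anti hq

lemma Hmu_apply (π : Equiv.Perm (Fin n)) (j : Fin n) : Hmu π (π j) = M π j := by
  rw [Hmu, π.symm_apply_apply]

/-- In an avoiding permutation, if the prefix minimum does not drop, the word ascends. -/
lemma step {π : Equiv.Perm (Fin n)} (hA : AvoidsAdCB n π) {t : ℕ} (ht : t + 1 < n)
    (h : M π ⟨t + 1, ht⟩ = M π ⟨t, Nat.lt_of_succ_lt ht⟩) :
    π ⟨t, Nat.lt_of_succ_lt ht⟩ < π ⟨t + 1, ht⟩ := by
  by_contra hcon
  have hne : π ⟨t + 1, ht⟩ ≠ π ⟨t, Nat.lt_of_succ_lt ht⟩ := by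
    intro he
    have := π.injective he
    simp only [Fin.mk.injEq] at this
    omega
  have hdesc : π ⟨t + 1, ht⟩ < π ⟨t, Nat.lt_of_succ_lt ht⟩ :=
    lt_of_le_of_ne (not_lt.mp hcon) hne
  have hsmall : ∀ q : Fin n, q ≤ ⟨t, Nat.lt_of_succ_lt ht⟩ → π ⟨t + 1, ht⟩ ≤ π q := by
    intro q hq
    rcases eq_or_lt_of_le hq with h1 | h1
    · rw [h1]; exact hdesc.le
    · have h2 : (q : ℕ) < t := h1
      have h3 := hA q t q.isLt ht h2
      push_neg at h3
      have h5 : ¬ (π ⟨(q : ℕ), q.isLt⟩ < π ⟨t + 1, ht⟩) :=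
        fun hlt => absurd (h3 hlt) (not_le.mpr hdesc)
      have heq : (⟨(q : ℕ), q.isLt⟩ : Fin n) = q := Fin.ext rfl
      rw [heq] at h5
      exact not_lt.mp h5
  have hMt1 : M π ⟨t + 1, ht⟩ = π ⟨t + 1, ht⟩ := by
    apply le_antisymm (M_le le_rfl)
    apply le_M
    intro q hq
    rcases eq_or_lt_of_le hq with h1 | h1
    · rw [h1]
    · have h2 : q ≤ (⟨t, Nat.lt_of_succ_lt ht⟩ : Fin n) := by
        rw [Fin.le_def]
        exact Nat.lt_succ_iff.mp h1
      exact hsmall q h2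
  obtain ⟨q, hq, hq'⟩ := M_attained π ⟨t, Nat.lt_of_succ_lt ht⟩
  rw [← h, hMt1] at hq'
  have hqe : q = ⟨t + 1, ht⟩ := π.injective hq'
  rw [hqe, Fin.le_def] at hq
  exact absurd hq (by simp)

/-- On a stretch where the prefix minimum is constant, an avoiding word increases. -/
lemma chainN {π : Equiv.Perm (Fin n)} (hA : AvoidsAdCB n π) :
    ∀ (d i : ℕ) (hd : i + d + 1 < n),
      M π ⟨i + d + 1, hd⟩ = M π ⟨i, by omega⟩ →
        π ⟨i, by omega⟩ < π ⟨i + d + 1, hd⟩ := by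
  intro d
  induction d with
  | zero =>
    intro i hd hM
    exact step hA hd hM
  | succ d ih =>
    intro i hd hM
    have hd'' : (i + d + 1) + 1 < n := by omega
    have hd' : i + d + 1 < n := by omega
    have hi : i < n := by omega
    have he : (⟨i + (d + 1) + 1, hd⟩ : Fin n) = ⟨(i + d + 1) + 1, hd''⟩ := by
      apply Fin.ext
      show i + (d + 1) + 1 = (i + d + 1) + 1
      omega
    rw [he] at hM ⊢
    have hanti1 : M π ⟨i + d + 1, hd'⟩ ≤ M π ⟨i, hi⟩ :=
      M_anti (Fin.mk_le_mk.mpr (by omega))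
    have hanti2 : M π ⟨(i + d + 1) + 1, hd''⟩ ≤ M π ⟨i + d + 1, hd'⟩ :=
      M_anti (Fin.mk_le_mk.mpr (by omega))
    have hmid : M π ⟨i + d + 1, hd'⟩ = M π ⟨i, hi⟩ := by
      apply le_antisymm hanti1
      calc M π ⟨i, hi⟩ = M π ⟨(i + d + 1) + 1, hd''⟩ := hM.symm
        _ ≤ M π ⟨i + d + 1, hd'⟩ := hanti2
    have hMstep : M π ⟨(i + d + 1) + 1, hd''⟩ = M π ⟨i + d + 1, Nat.lt_of_succ_lt hd''⟩ :=
      hM.trans hmid.symm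
    have h2 : π ⟨i + d + 1, Nat.lt_of_succ_lt hd''⟩ < π ⟨(i + d + 1) + 1, hd''⟩ :=
      step hA hd'' hMstep
    have h1 : π ⟨i, hi⟩ < π ⟨i + d + 1, hd'⟩ := ih i hd' hmid
    exact h1.trans h2

lemma chain {π : Equiv.Perm (Fin n)} (hA : AvoidsAdCB n π) {i j : Fin n} (hij : i < j)
    (hM : M π i = M π j) : π i < π j := by
  have h1 : (i : ℕ) + ((j : ℕ) - (i : ℕ) - 1) + 1 = (j : ℕ) := by
    have := (Fin.lt_def.mp hij); omega
  have h2 : (i : ℕ) + ((j : ℕ) - (i : ℕ) - 1) + 1 < n := by rw [h1]; exact j.isLt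
  have hi : (⟨(i : ℕ), by omega⟩ : Fin n) = i := Fin.ext rfl
  have hj : (⟨(i : ℕ) + ((j : ℕ) - (i : ℕ) - 1) + 1, h2⟩ : Fin n) = j := Fin.ext h1
  have := chainN hA ((j : ℕ) - (i : ℕ) - 1) (i : ℕ) h2 (by rw [hi, hj, hM])
  rwa [hi, hj] at this

/-- An avoiding permutation is sorted with respect to the key of its own `Hmu`. -/
lemma sorted_of_avoiding {π : Equiv.Perm (Fin n)} (hA : AvoidsAdCB n π) {i j : Fin n}
    (hij : i < j) : key (Hmu π) (π i) < key (Hmu π) (π j) := by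
  have h1 : Hmu π (π i) = M π i := Hmu_apply π i
  have h2 : Hmu π (π j) = M π j := Hmu_apply π j
  rcases eq_or_lt_of_le (M_anti hij.le) with hMe | hMl
  · have hlt : π i < π j := chain hA hij hMe.symm
    exact key_lt_of_mu_eq (by rw [h1, h2, hMe]) hlt
  · exact key_lt_of_mu_lt (by rw [h1, h2]; exact hMl)


def Good (μ : Fin n → Fin n) : Prop := ∀ v, μ (μ v) = μ v ∧ μ v ≤ v

lemma good_Hmu {π : Equiv.Perm (Fin n)} : Good (Hmu π) :=
  fun v => ⟨Hmu_idem π v, Hmu_le π v⟩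

/-- Key fact: an avoiding permutation equals the sorted permutation of its own `Hmu`. -/
lemma avoiding_eq_permOf {π : Equiv.Perm (Fin n)} (hA : AvoidsAdCB n π) :
    π = permOf (Hmu π) :=
  eq_permOf_of_sorted (Hmu π) π (fun _ _ h => sorted_of_avoiding hA h)

/-- Round trip: for good `μ`, the `Hmu` of the sorted permutation is `μ` itself. -/
lemma Hmu_permOf {μ : Fin n → Fin n} (hg : Good μ) : Hmu (permOf μ) = μ := by
  funext v
  set π := permOf μ with hπ
  set p := π.symm v with hp
  have hπp : π p = v := π.apply_symm_apply v
  show M π p = μ v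
  -- lower bound : μ v ≤ every entry of the prefix
  have hlow : ∀ q, q ≤ p → μ v ≤ π q := by
    intro q hq
    have hkey : key μ (π q) ≤ key μ (π p) := by
      rcases eq_or_lt_of_le hq with h1 | h1
      · rw [h1]
      · exact (sorted_permOf h1).le
    rw [hπp] at hkey
    have h2 : (μ v : ℕ) ≤ μ (π q) := mu_le_of_key_le hkey
    have h3 : (μ (π q) : ℕ) ≤ π q := (hg (π q)).2
    exact Fin.le_def.mpr (le_trans h2 h3)
  -- μ v is attained in the prefix
  have hkeyμ : key μ (μ v) ≤ key μ v := by
    unfold key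
    rw [(hg v).1]
    have := (hg v).2
    have h1 : (μ v : ℕ) ≤ (v : ℕ) := this
    omega
  have hq0 : π.symm (μ v) ≤ p := by
    by_contra hcon
    have h1 : p < π.symm (μ v) := not_le.mp hcon
    have h2 := sorted_permOf (μ := μ) h1
    rw [hπp, π.apply_symm_apply] at h2
    exact absurd hkeyμ (not_le.mpr h2)
  have hmem : M π p ≤ μ v := by
    have := M_le (π := π) hq0
    rwa [π.apply_symm_apply] at this
  exact le_antisymm hmem (le_M hlow)

/-- The sorted permutation of a good `μ` is avoiding. -/
lemma avoid_of_good {μ : Fin n → Fin n} (hg : Good μ) : AvoidsAdCB n (permOf μ) := by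
  intro i j hi hj hij
  rintro ⟨h1, h2⟩
  set π := permOf μ with hπ
  set a := π ⟨i, hi⟩ with ha
  set c := π ⟨j, Nat.lt_of_succ_lt hj⟩ with hc
  set b' := π ⟨j + 1, hj⟩ with hb'
  have hik : key μ a < key μ c := sorted_permOf (Fin.mk_lt_mk.mpr hij)
  have hjk : key μ c < key μ b' := sorted_permOf (Fin.mk_lt_mk.mpr (by omega))
  -- from key c < key b' and b' < c : μ b' < μ c
  have hmu1 : (μ b' : ℕ) < μ c := by
    by_contra hcon
    have h3 : (μ c : ℕ) ≤ μ b' := not_lt.mp hcon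
    rcases eq_or_lt_of_le h3 with h4 | h4
    · exact absurd (key_lt_of_mu_eq h4.symm (Fin.lt_def.mp h2)) (by omega)
    · exact absurd (key_lt_of_mu_lt h4) (by omega)
  have hmu2 : (μ b' : ℕ) ≤ μ a := mu_le_of_key_le hjk.le |>.trans (mu_le_of_key_le hik.le)
  rcases eq_or_lt_of_le hmu2 with hcase | hcase
  · -- μ a = μ b' : contradiction with key a < key c and μ c > μ b'
    have h5 : (μ c : ℕ) ≤ μ a := mu_le_of_key_le hik.le
    omega
  · -- μ b' < μ a : the element b = μ b' would have to sit strictly between positions j and j+1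
    set b := μ b' with hb
    have hbb : μ b = b := (hg b').1
    have hblt : (b : ℕ) < b' := by
      have h6 : (μ a : ℕ) ≤ a := (hg a).2
      have h7 : (a : ℕ) < b' := Fin.lt_def.mp h1
      omega
    have hk1 : key μ c < key μ b := key_lt_of_mu_lt (by rw [hbb]; exact hmu1)
    have hk2 : key μ b < key μ b' := key_lt_of_mu_eq (by rw [hbb]) hblt
    have hpos1 : (⟨j, Nat.lt_of_succ_lt hj⟩ : Fin n) < π.symm b := by
      apply pos_lt_of_key_lt (μ := μ)
      rwa [π.apply_symm_apply, ← hc]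
    have hpos2 : π.symm b < (⟨j + 1, hj⟩ : Fin n) := by
      apply pos_lt_of_key_lt (μ := μ)
      rwa [π.apply_symm_apply, ← hb']
    have e1 : j < ((π.symm b : Fin n) : ℕ) := hpos1
    have e2 : ((π.symm b : Fin n) : ℕ) < j + 1 := hpos2
    omega


/-- Minimum of the block of `v` in `P`. -/
noncomputable def muP (P : Finset (Finset (Fin n))) (v : Fin n) : Fin n :=
  (insert v ((P.filter (fun A => v ∈ A)).biUnion id)).min' (Finset.insert_nonempty _ _)

lemma min'_congr {s t : Finset (Fin n)} (h : s = t) (hs : s.Nonempty) :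
    s.min' hs = t.min' (h ▸ hs) := by subst h; rfl

lemma muP_set {P : Finset (Finset (Fin n))} (hP : IsSetPartition n P) {A : Finset (Fin n)}
    (hA : A ∈ P) {v : Fin n} (hv : v ∈ A) :
    insert v ((P.filter (fun B => v ∈ B)).biUnion id) = A := by
  ext w
  simp only [Finset.mem_insert, Finset.mem_biUnion, Finset.mem_filter, id]
  constructor
  · rintro (rfl | ⟨B, ⟨hB, hvB⟩, hwB⟩)
    · exact hv
    · rcases eq_or_ne A B with rfl | hne
      · exact hwB
      · exact absurd (Finset.disjoint_left.mp (hP.2.1 A hA B hB hne)) (by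
          intro hdisj
          exact hdisj hv hvB)
  · intro hw
    exact Or.inr ⟨A, ⟨hA, hv⟩, hw⟩

lemma muP_block {P : Finset (Finset (Fin n))} (hP : IsSetPartition n P) {A : Finset (Fin n)}
    (hA : A ∈ P) {v : Fin n} (hv : v ∈ A) :
    muP P v = A.min' ⟨v, hv⟩ := by
  have h := muP_set hP hA hv
  unfold muP
  rw [min'_congr h]

lemma muP_mem {P : Finset (Finset (Fin n))} (hP : IsSetPartition n P) {A : Finset (Fin n)}
    (hA : A ∈ P) {v : Fin n} (hv : v ∈ A) : muP P v ∈ A := by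
  rw [muP_block hP hA hv]
  exact A.min'_mem _

lemma muP_good {P : Finset (Finset (Fin n))} (hP : IsSetPartition n P) : Good (muP P) := by
  intro v
  obtain ⟨A, hA, hv⟩ := hP.2.2 v
  constructor
  · have h1 : muP P v ∈ A := muP_mem hP hA hv
    rw [muP_block hP hA h1]
    exact (muP_block hP hA hv).symm
  · rw [muP_block hP hA hv]
    exact A.min'_le v hv

/-- Blocks of `μ` : the fibers of `μ`. -/
def blocksOf (μ : Fin n → Fin n) : Finset (Finset (Fin n)) :=
  (Finset.univ.image μ).image (fun r => Finset.univ.filter (fun v => μ v = r))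

lemma mem_blocksOf {μ : Fin n → Fin n} {A : Finset (Fin n)} :
    A ∈ blocksOf μ ↔ ∃ u : Fin n, Finset.univ.filter (fun v => μ v = μ u) = A := by
  simp only [blocksOf, Finset.mem_image, Finset.mem_univ, true_and]
  constructor
  · rintro ⟨r, ⟨u, rfl⟩, rfl⟩
    exact ⟨u, rfl⟩
  · rintro ⟨u, rfl⟩
    exact ⟨μ u, ⟨u, rfl⟩, rfl⟩

lemma partition_blocksOf (μ : Fin n → Fin n) : IsSetPartition n (blocksOf μ) := by
  refine ⟨?_, ?_, ?_⟩
  · intro A hA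
    obtain ⟨u, rfl⟩ := mem_blocksOf.mp hA
    exact ⟨u, by simp⟩
  · intro A hA B hB hne
    obtain ⟨u, rfl⟩ := mem_blocksOf.mp hA
    obtain ⟨w, rfl⟩ := mem_blocksOf.mp hB
    rw [Finset.disjoint_left]
    intro x hx hx'
    simp only [Finset.mem_filter, Finset.mem_univ, true_and] at hx hx'
    exact hne (by rw [← hx, hx'])
  · intro x
    exact ⟨Finset.univ.filter (fun v => μ v = μ x), mem_blocksOf.mpr ⟨x, rfl⟩, by simp⟩

lemma fiber_eq_block {P : Finset (Finset (Fin n))} (hP : IsSetPartition n P)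
    {A : Finset (Fin n)} (hA : A ∈ P) {v : Fin n} (hv : v ∈ A) :
    Finset.univ.filter (fun w => muP P w = muP P v) = A := by
  ext w
  simp only [Finset.mem_filter, Finset.mem_univ, true_and]
  constructor
  · intro hw
    obtain ⟨B, hB, hwB⟩ := hP.2.2 w
    have h1 : muP P w ∈ B := muP_mem hP hB hwB
    have h2 : muP P v ∈ A := muP_mem hP hA hv
    rcases eq_or_ne A B with rfl | hne
    · exact hwB
    · exfalso
      rw [hw] at h1
      exact Finset.disjoint_left.mp (hP.2.1 A hA B hB hne) h2 h1
  · intro hw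
    rw [muP_block hP hA hw, muP_block hP hA hv]

lemma blocksOf_muP {P : Finset (Finset (Fin n))} (hP : IsSetPartition n P) :
    blocksOf (muP P) = P := by
  ext A
  rw [mem_blocksOf]
  constructor
  · rintro ⟨u, rfl⟩
    obtain ⟨B, hB, huB⟩ := hP.2.2 u
    rw [fiber_eq_block hP hB huB]
    exact hB
  · intro hA
    obtain ⟨v, hv⟩ := hP.1 A hA
    exact ⟨v, fiber_eq_block hP hA hv⟩

lemma muP_blocksOf {μ : Fin n → Fin n} (hg : Good μ) : muP (blocksOf μ) = μ := by
  funext v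
  have hAmem : Finset.univ.filter (fun w => μ w = μ v) ∈ blocksOf μ := mem_blocksOf.mpr ⟨v, rfl⟩
  have hvmem : v ∈ Finset.univ.filter (fun w => μ w = μ v) := by simp
  rw [muP_block (partition_blocksOf μ) hAmem hvmem]
  apply le_antisymm
  · exact Finset.min'_le _ _ (by simp [(hg v).1])
  · apply Finset.le_min'
    intro w hw
    simp only [Finset.mem_filter, Finset.mem_univ, true_and] at hw
    calc μ v = μ w := hw.symm
      _ ≤ w := (hg w).2

theorem main (n : ℕ) :
    {π : Equiv.Perm (Fin n) | AvoidsAdCB n π}.ncard =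
      {P : Finset (Finset (Fin n)) | IsSetPartition n P}.ncard := by
  have h1 : Set.InjOn (permOf (n := n)) {μ | Good μ} := by
    intro μ1 hg1 μ2 hg2 h
    rw [← Hmu_permOf hg1, ← Hmu_permOf hg2, h]
  have h2 : permOf '' {μ | Good μ} = {π : Equiv.Perm (Fin n) | AvoidsAdCB n π} := by
    ext π
    constructor
    · rintro ⟨μ, hg, rfl⟩
      exact avoid_of_good hg
    · intro hA
      exact ⟨Hmu π, good_Hmu, (avoiding_eq_permOf hA).symm⟩
  have h3 : Set.InjOn (blocksOf (n := n)) {μ | Good μ} := by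
    intro μ1 hg1 μ2 hg2 h
    rw [← muP_blocksOf hg1, ← muP_blocksOf hg2, h]
  have h4 : blocksOf '' {μ | Good μ} =
      {P : Finset (Finset (Fin n)) | IsSetPartition n P} := by
    ext P
    constructor
    · rintro ⟨μ, hg, rfl⟩
      exact partition_blocksOf μ
    · intro hP
      exact ⟨muP P, muP_good hP, blocksOf_muP hP⟩
  rw [← h2, ← h4, Set.ncard_image_of_injOn h1, Set.ncard_image_of_injOn h3]

end AdCBProof

/-- The number of (a-cb)-avoiding permutations of `[n]` is the `n`-th Bell number,
i.e. the number of set partitions of `[n]`. -/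
theorem avoid_adcb_eq_bell (n : ℕ) :
    {π : Equiv.Perm (Fin n) | AvoidsAdCB n π}.ncard =
      {P : Finset (Finset (Fin n)) | IsSetPartition n P}.ncard :=
  AdCBProof.main n
end

section
/- For every n ≥ 1 and every k ≥ 0, the number of (a-cb)-avoiding permutations of [n] having exactly k descents equals S(n,k+1), the number of set partitions of [n] into exactly k+1 blocks. -/
/-- The number of descents of `π`: (0-based) indices `i` with `i + 1 < n` and
`π i > π (i+1)`. -/
noncomputable def des (n : ℕ) (π : Equiv.Perm (Fin n)) : ℕ :=
  {i : ℕ | ∃ h : i + 1 < n, π ⟨i + 1, h⟩ < π ⟨i, Nat.lt_of_succ_lt h⟩}.ncard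

namespace AdCBAux

open Finset

variable {n : ℕ}

open scoped Classical in
/-- The set of descent positions of `π`, as a `Finset ℕ`. -/
noncomputable def Desc (n : ℕ) (π : Equiv.Perm (Fin n)) : Finset ℕ :=
  (Finset.range n).filter fun j =>
    ∃ h : j + 1 < n, π ⟨j + 1, h⟩ < π ⟨j, Nat.lt_of_succ_lt h⟩

lemma mem_Desc {π : Equiv.Perm (Fin n)} {j : ℕ} :
    j ∈ Desc n π ↔ ∃ h : j + 1 < n, π ⟨j + 1, h⟩ < π ⟨j, Nat.lt_of_succ_lt h⟩ := by
  classical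
  simp only [Desc, Finset.mem_filter, Finset.mem_range]
  constructor
  · rintro ⟨-, h⟩; exact h
  · rintro ⟨h, hd⟩; exact ⟨Nat.lt_of_succ_lt h, h, hd⟩

lemma des_eq (π : Equiv.Perm (Fin n)) : des n π = (Desc n π).card := by
  have h : {i : ℕ | ∃ h : i + 1 < n, π ⟨i + 1, h⟩ < π ⟨i, Nat.lt_of_succ_lt h⟩}
      = ↑(Desc n π) := by
    ext i
    simp only [Set.mem_setOf_eq, Finset.coe_sort_coe, Finset.mem_coe, mem_Desc]
  rw [des, h, Set.ncard_coe_finset]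

open scoped Classical in
/-- `rr n π i` is the number of descents at positions `< i` (the run index of position `i`). -/
noncomputable def rr (n : ℕ) (π : Equiv.Perm (Fin n)) (i : ℕ) : ℕ :=
  ((Desc n π).filter fun j => j < i).card

lemma rr_zero (π : Equiv.Perm (Fin n)) : rr n π 0 = 0 := by
  classical
  simp [rr]

lemma rr_mono (π : Equiv.Perm (Fin n)) {i j : ℕ} (h : i ≤ j) : rr n π i ≤ rr n π j := by
  classical
  apply Finset.card_le_card
  intro x hx
  rw [Finset.mem_filter] at hx ⊢
  exact ⟨hx.1, by omega⟩

lemma rr_succ_mem (π : Equiv.Perm (Fin n)) {i : ℕ} (h : i ∈ Desc n π) :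
    rr n π (i + 1) = rr n π i + 1 := by
  classical
  have : (Desc n π).filter (fun j => j < i + 1) =
      insert i ((Desc n π).filter fun j => j < i) := by
    ext x
    simp only [Finset.mem_filter, Finset.mem_insert]
    constructor
    · rintro ⟨hx, hlt⟩
      rcases Nat.lt_succ_iff_lt_or_eq.mp hlt with h' | h'
      · exact Or.inr ⟨hx, h'⟩
      · exact Or.inl h'
    · rintro (rfl | ⟨hx, hlt⟩)
      · exact ⟨h, Nat.lt_succ_self _⟩
      · exact ⟨hx, by omega⟩
  unfold rr
  rw [this, Finset.card_insert_of_notMem (by simp)]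

lemma rr_succ_notMem (π : Equiv.Perm (Fin n)) {i : ℕ} (h : i ∉ Desc n π) :
    rr n π (i + 1) = rr n π i := by
  classical
  have : (Desc n π).filter (fun j => j < i + 1) = (Desc n π).filter fun j => j < i := by
    ext x
    simp only [Finset.mem_filter]
    constructor
    · rintro ⟨hx, hlt⟩
      refine ⟨hx, ?_⟩
      rcases Nat.lt_succ_iff_lt_or_eq.mp hlt with h' | rfl
      · exact h'
      · exact absurd hx h
    · rintro ⟨hx, hlt⟩; exact ⟨hx, by omega⟩
  rw [rr, this]; rfl

lemma rr_le_succ (π : Equiv.Perm (Fin n)) (i : ℕ) : rr n π (i + 1) ≤ rr n π i + 1 := by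
  classical
  by_cases h : i ∈ Desc n π
  · rw [rr_succ_mem π h]
  · rw [rr_succ_notMem π h]; omega

lemma rr_le (π : Equiv.Perm (Fin n)) (i : ℕ) : rr n π i ≤ (Desc n π).card := by
  classical
  exact Finset.card_le_card (Finset.filter_subset _ _)

lemma rr_top (π : Equiv.Perm (Fin n)) : rr n π (n - 1) = (Desc n π).card := by
  classical
  unfold rr
  rw [Finset.filter_true_of_mem]
  intro x hx
  obtain ⟨h, -⟩ := mem_Desc.mp hx
  omega

lemma ivt (f : ℕ → ℕ) (h0 : f 0 = 0) (hstep : ∀ i, f (i + 1) ≤ f i + 1)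
    (m t : ℕ) (ht : t ≤ f m) : ∃ i ≤ m, f i = t := by
  induction m with
  | zero => exact ⟨0, le_refl 0, by omega⟩
  | succ m ih =>
    by_cases h : t ≤ f m
    · obtain ⟨i, hi, hfi⟩ := ih h
      exact ⟨i, by omega, hfi⟩
    · exact ⟨m + 1, le_refl _, by have := hstep m; omega⟩

lemma rr_surj (hn : 1 ≤ n) (π : Equiv.Perm (Fin n)) {t : ℕ} (ht : t ≤ (Desc n π).card) :
    ∃ i, i < n ∧ rr n π i = t := by
  obtain ⟨i, hi, hfi⟩ := ivt (rr n π) (rr_zero π) (rr_le_succ π) (n - 1) t (by rw [rr_top]; exact ht)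
  exact ⟨i, by omega, hfi⟩

lemma run_lt (π : Equiv.Perm (Fin n)) : ∀ {j : ℕ} (hj : j < n) {i : ℕ} (hij : i < j),
    rr n π i = rr n π j → π ⟨i, lt_trans hij hj⟩ < π ⟨j, hj⟩ := by
  intro j
  induction j with
  | zero => omega
  | succ j ih =>
    intro hj i hij hr
    have hj' : j < n := Nat.lt_of_succ_lt hj
    have h1 : rr n π i ≤ rr n π j := rr_mono π (by omega)
    have h2 : rr n π j ≤ rr n π (j + 1) := rr_mono π (by omega)
    have hjd : j ∉ Desc n π := by
      intro hd
      have := rr_succ_mem π hd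
      omega
    have hle : π ⟨j, hj'⟩ < π ⟨j + 1, hj⟩ := by
      rw [mem_Desc] at hjd
      push_neg at hjd
      have h3 := hjd hj
      rcases lt_or_eq_of_le h3 with h4 | h4
      · exact h4
      · exfalso
        have := π.injective h4
        simp only [Fin.mk.injEq] at this
        omega
    rcases Nat.lt_succ_iff_lt_or_eq.mp hij with h' | h'
    · exact lt_trans (ih hj' h' (by omega)) hle
    · subst h'; exact hle

lemma bottom_min (π : Equiv.Perm (Fin n)) (hA : AvoidsAdCB n π) {j : ℕ} (hd : j ∈ Desc n π)
    {i : ℕ} (hij : i ≤ j) (hj : j + 1 < n) :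
    π ⟨j + 1, hj⟩ < π ⟨i, by omega⟩ := by
  obtain ⟨hj', hdesc⟩ := mem_Desc.mp hd
  rcases lt_or_eq_of_le hij with h | h
  · have := hA i j (by omega) hj h
    have h5 : ¬ π ⟨i, by omega⟩ < π ⟨j + 1, hj⟩ := fun hc => this ⟨hc, by
      convert hdesc using 3⟩
    rcases lt_or_eq_of_le (not_lt.mp h5) with h6 | h6
    · exact h6
    · exfalso
      have := π.injective h6
      simp only [Fin.mk.injEq] at this
      omega
  · subst h
    convert hdesc using 3

/-- The first position of run `t`. -/
noncomputable def sOf (n : ℕ) (π : Equiv.Perm (Fin n)) (t : ℕ) : ℕ :=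
  sInf {i | rr n π i = t}

lemma rr_sOf (hn : 1 ≤ n) (π : Equiv.Perm (Fin n)) {t : ℕ} (ht : t ≤ (Desc n π).card) :
    rr n π (sOf n π t) = t := by
  obtain ⟨i, hi, hfi⟩ := rr_surj hn π ht
  exact Nat.sInf_mem (⟨i, hfi⟩ : {i | rr n π i = t}.Nonempty)

lemma sOf_lt (hn : 1 ≤ n) (π : Equiv.Perm (Fin n)) {t : ℕ} (ht : t ≤ (Desc n π).card) :
    sOf n π t < n := by
  obtain ⟨i, hi, hfi⟩ := rr_surj hn π ht
  exact lt_of_le_of_lt (Nat.sInf_le hfi) hi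

lemma sOf_le (π : Equiv.Perm (Fin n)) {t i : ℕ} (h : rr n π i = t) : sOf n π t ≤ i :=
  Nat.sInf_le h

lemma pi_sOf_min (hn : 1 ≤ n) (π : Equiv.Perm (Fin n)) {t : ℕ} (ht : t ≤ (Desc n π).card)
    {i : ℕ} (hi : i < n) (h : rr n π i = t) :
    π ⟨sOf n π t, sOf_lt hn π ht⟩ ≤ π ⟨i, hi⟩ := by
  rcases lt_or_eq_of_le (sOf_le π h) with h' | h'
  · exact le_of_lt (run_lt π hi h' (by rw [rr_sOf hn π ht, h]))
  · exact le_of_eq (by congr 1; exact Fin.ext h')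

lemma start_lrmin (hn : 1 ≤ n) (π : Equiv.Perm (Fin n)) (hA : AvoidsAdCB n π) {t : ℕ}
    (ht1 : 1 ≤ t) (ht : t ≤ (Desc n π).card) {i : ℕ} (hi : i < sOf n π t) :
    π ⟨sOf n π t, sOf_lt hn π ht⟩ < π ⟨i, lt_trans hi (sOf_lt hn π ht)⟩ := by
  set s := sOf n π t with hs
  have hrs : rr n π s = t := rr_sOf hn π ht
  have hs1 : 1 ≤ s := by
    rcases Nat.eq_zero_or_pos s with h | h
    · exfalso; rw [h, rr_zero] at hrs; omega
    · exact h
  have hne : rr n π (s - 1) ≠ t := by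
    intro hc
    have := sOf_le π hc
    omega
  have hlt : rr n π (s - 1) < t := by
    have := rr_mono π (show s - 1 ≤ s by omega)
    omega
  have hstep : rr n π s ≤ rr n π (s - 1) + 1 := by
    have := rr_le_succ π (s - 1)
    have hss : s - 1 + 1 = s := by omega
    rwa [hss] at this
  have hmem : s - 1 ∈ Desc n π := by
    by_contra hc
    have := rr_succ_notMem π hc
    have hss : s - 1 + 1 = s := by omega
    rw [hss] at this
    omega
  have hsn : s < n := sOf_lt hn π ht
  have hj : (s - 1) + 1 < n := by omega
  have := bottom_min π hA hmem (show i ≤ s - 1 by omega) hj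
  convert this using 3
  omega

open scoped Classical in
/-- The `t`-th block: values of the `t`-th increasing run. -/
noncomputable def blk (n : ℕ) (π : Equiv.Perm (Fin n)) (t : ℕ) : Finset (Fin n) :=
  (Finset.univ.filter fun i : Fin n => rr n π i.val = t).image π

lemma mem_blk {π : Equiv.Perm (Fin n)} {x : Fin n} {t : ℕ} :
    x ∈ blk n π t ↔ rr n π (π.symm x).val = t := by
  classical
  simp only [blk, Finset.mem_image, Finset.mem_filter, Finset.mem_univ, true_and]
  constructor
  · rintro ⟨i, hi, rfl⟩
    rwa [Equiv.symm_apply_apply]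
  · intro h
    exact ⟨π.symm x, h, π.apply_symm_apply x⟩

/-- The partition associated to `π`: the set of its runs' value-sets. -/
noncomputable def Phi (n : ℕ) (π : Equiv.Perm (Fin n)) : Finset (Finset (Fin n)) :=
  (Finset.range ((Desc n π).card + 1)).image (blk n π)

lemma blk_nonempty (hn : 1 ≤ n) (π : Equiv.Perm (Fin n)) {t : ℕ} (ht : t ≤ (Desc n π).card) :
    (blk n π t).Nonempty := by
  obtain ⟨i, hi, hfi⟩ := rr_surj hn π ht
  refine ⟨π ⟨i, hi⟩, ?_⟩
  rw [mem_blk, Equiv.symm_apply_apply]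
  exact hfi

lemma Phi_isPartition (hn : 1 ≤ n) (π : Equiv.Perm (Fin n)) : IsSetPartition n (Phi n π) := by
  classical
  refine ⟨?_, ?_, ?_⟩
  · intro A hA
    obtain ⟨t, ht, rfl⟩ := Finset.mem_image.mp hA
    exact blk_nonempty hn π (by simpa using Nat.lt_succ_iff.mp (Finset.mem_range.mp ht))
  · intro A hA B hB hne
    obtain ⟨t, ht, rfl⟩ := Finset.mem_image.mp hA
    obtain ⟨u, hu, rfl⟩ := Finset.mem_image.mp hB
    rw [Finset.disjoint_left]
    intro x hx hx'
    rw [mem_blk] at hx hx'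
    exact hne (by rw [← hx, hx'])
  · intro x
    refine ⟨blk n π (rr n π (π.symm x).val), ?_, ?_⟩
    · exact Finset.mem_image.mpr ⟨rr n π (π.symm x).val,
        Finset.mem_range.mpr (Nat.lt_succ_of_le (rr_le π _)), rfl⟩
    · rw [mem_blk]

lemma Phi_card (hn : 1 ≤ n) (π : Equiv.Perm (Fin n)) :
    (Phi n π).card = (Desc n π).card + 1 := by
  classical
  rw [Phi, Finset.card_image_of_injOn, Finset.card_range]
  intro t ht u hu h
  rw [Finset.mem_coe, Finset.mem_range] at ht hu
  obtain ⟨x, hx⟩ := blk_nonempty hn π (show t ≤ (Desc n π).card by omega)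
  have hx' : x ∈ blk n π u := h ▸ hx
  rw [mem_blk] at hx hx'
  omega

open scoped Classical in
/-- The minimum of the block containing `x` (as an element of `WithBot`). -/
noncomputable def mOf (P : Finset (Finset (Fin n))) (x : Fin n) : WithTop (Fin n) :=
  ((P.filter fun A => x ∈ A).biUnion id).min

lemma block_unique {P : Finset (Finset (Fin n))} (hP : IsSetPartition n P) {A B : Finset (Fin n)}
    (hA : A ∈ P) (hB : B ∈ P) {x : Fin n} (hxA : x ∈ A) (hxB : x ∈ B) : A = B := by
  by_contra h
  exact (Finset.disjoint_left.mp (hP.2.1 A hA B hB h) hxA) hxB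

lemma mOf_eq {P : Finset (Finset (Fin n))} (hP : IsSetPartition n P) {A : Finset (Fin n)}
    (hA : A ∈ P) {x : Fin n} (hx : x ∈ A) : mOf P x = A.min := by
  classical
  have h : (P.filter fun B => x ∈ B) = {A} := by
    ext B
    simp only [Finset.mem_filter, Finset.mem_singleton]
    constructor
    · rintro ⟨hB, hxB⟩
      exact block_unique hP hB hA hxB hx
    · rintro rfl
      exact ⟨hA, hx⟩
  rw [mOf, h, Finset.singleton_biUnion]
  rfl

lemma mOf_le {P : Finset (Finset (Fin n))} (hP : IsSetPartition n P) {A : Finset (Fin n)}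
    (hA : A ∈ P) {x : Fin n} (hx : x ∈ A) : mOf P x ≤ (x : WithTop (Fin n)) := by
  rw [mOf_eq hP hA hx]
  exact Finset.min_le hx

/-- The sorting key for the inverse bijection. -/
noncomputable def key (P : Finset (Finset (Fin n))) (x : Fin n) :
    Lex ((WithTop (Fin n))ᵒᵈ × Fin n) :=
  toLex (OrderDual.toDual (mOf P x), x)

lemma key_injective (P : Finset (Finset (Fin n))) : Function.Injective (key P) := by
  intro x y h
  have := congrArg (fun z => (ofLex z).2) h
  simpa [key] using this

lemma key_lt_iff {P : Finset (Finset (Fin n))} {x y : Fin n} :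
    key P x < key P y ↔ mOf P y < mOf P x ∨ (mOf P x = mOf P y ∧ x < y) := by
  rw [key, key, Prod.Lex.lt_iff]
  simp

lemma key_le_iff {P : Finset (Finset (Fin n))} {x y : Fin n} :
    key P x ≤ key P y ↔ mOf P y < mOf P x ∨ (mOf P x = mOf P y ∧ x ≤ y) := by
  rw [key, key, Prod.Lex.le_iff]
  simp

lemma mOf_pi (hn : 1 ≤ n) (π : Equiv.Perm (Fin n)) (i : Fin n) :
    mOf (Phi n π) (π i) =
      (π ⟨sOf n π (rr n π i.val), sOf_lt hn π (rr_le π _)⟩ : WithTop (Fin n)) := by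
  classical
  set t := rr n π i.val with htdef
  have ht : t ≤ (Desc n π).card := rr_le π _
  have hAmem : blk n π t ∈ Phi n π :=
    Finset.mem_image.mpr ⟨t, Finset.mem_range.mpr (Nat.lt_succ_of_le ht), rfl⟩
  have hx : π i ∈ blk n π t := by
    rw [mem_blk, Equiv.symm_apply_apply]
  rw [mOf_eq (Phi_isPartition hn π) hAmem hx]
  apply le_antisymm
  · apply Finset.min_le
    rw [mem_blk, Equiv.symm_apply_apply]
    exact rr_sOf hn π ht
  · apply Finset.le_min
    intro y hy
    rw [mem_blk] at hy
    rw [WithTop.coe_le_coe]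
    have := pi_sOf_min hn π ht (π.symm y).isLt hy
    simpa using this

lemma key_phi_strictMono (hn : 1 ≤ n) (π : Equiv.Perm (Fin n)) (hA : AvoidsAdCB n π) :
    StrictMono (fun i : Fin n => key (Phi n π) (π i)) := by
  intro i j hij
  rw [key_lt_iff]
  have hmi := mOf_pi hn π i
  have hmj := mOf_pi hn π j
  have htu : rr n π i.val ≤ rr n π j.val := rr_mono π (le_of_lt hij)
  rcases lt_or_eq_of_le htu with hlt | heq
  · left
    rw [hmi, hmj, WithTop.coe_lt_coe]
    have ht : rr n π j.val ≤ (Desc n π).card := rr_le π _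
    have h1t : 1 ≤ rr n π j.val := by omega
    have hsi : sOf n π (rr n π i.val) ≤ i.val := sOf_le π rfl
    have hij' : i.val < sOf n π (rr n π j.val) := by
      by_contra hc
      push_neg at hc
      have := rr_mono π hc
      rw [rr_sOf hn π ht] at this
      omega
    exact start_lrmin hn π hA h1t ht (by omega)
  · right
    have hfin : (⟨sOf n π (rr n π i.val), sOf_lt hn π (rr_le π _)⟩ : Fin n) =
        ⟨sOf n π (rr n π j.val), sOf_lt hn π (rr_le π _)⟩ := Fin.ext (congrArg (sOf n π) heq)
    constructor
    · rw [hmi, hmj, hfin]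
    · have := run_lt π j.isLt (show i.val < j.val from hij) (by rw [heq])
      simpa using this

section PartitionSide

variable {P : Finset (Finset (Fin n))} {π : Equiv.Perm (Fin n)}

lemma M_antitone (hk : StrictMono (fun i : Fin n => key P (π i))) {i j : Fin n} (hij : i ≤ j) :
    mOf P (π j) ≤ mOf P (π i) := by
  rcases lt_or_eq_of_le hij with h | h
  · have := hk h
    rw [key_lt_iff] at this
    rcases this with h' | ⟨h', -⟩
    · exact le_of_lt h'
    · exact le_of_eq h'.symm
  · subst h; rfl

lemma boundary (hP : IsSetPartition n P) (hk : StrictMono (fun i : Fin n => key P (π i)))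
    {i : Fin n} (h1 : i.val + 1 < n)
    (hne : mOf P (π ⟨i.val + 1, h1⟩) ≠ mOf P (π i)) :
    (π ⟨i.val + 1, h1⟩ : WithTop (Fin n)) = mOf P (π ⟨i.val + 1, h1⟩) := by
  classical
  have hij : i ≤ (⟨i.val + 1, h1⟩ : Fin n) := by
    rw [Fin.le_def]; simp
  obtain ⟨A, hAP, hxA⟩ := hP.2.2 (π ⟨i.val + 1, h1⟩)
  have hAne : A.Nonempty := ⟨_, hxA⟩
  have hvA : A.min' hAne ∈ A := A.min'_mem hAne
  have hminA : mOf P (π ⟨i.val + 1, h1⟩) = A.min := mOf_eq hP hAP hxA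
  have hminv : mOf P (A.min' hAne) = A.min := mOf_eq hP hAP hvA
  have hcoe : ((A.min' hAne : Fin n) : WithTop (Fin n)) = A.min := Finset.coe_min' hAne
  have hπb : π (π.symm (A.min' hAne)) = A.min' hAne := π.apply_symm_apply _
  have hkey : key P (π (π.symm (A.min' hAne))) ≤ key P (π ⟨i.val + 1, h1⟩) := by
    rw [key_le_iff, hπb]
    right
    exact ⟨by rw [hminv, hminA], A.min'_le _ hxA⟩
  have hbj : π.symm (A.min' hAne) ≤ ⟨i.val + 1, h1⟩ := (hk.le_iff_le).mp hkey
  rcases lt_or_eq_of_le hbj with hblt | hbeq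
  · exfalso
    have hbi : π.symm (A.min' hAne) ≤ i := by
      rw [Fin.le_def]
      have := Fin.lt_def.mp hblt
      simp only [] at this ⊢
      omega
    have hkey2 : key P (π (π.symm (A.min' hAne))) ≤ key P (π i) := hk.monotone hbi
    have hle1 : mOf P (π i) ≤ mOf P (π (π.symm (A.min' hAne))) := by
      rw [key_le_iff] at hkey2
      rcases hkey2 with h' | ⟨h', -⟩
      · exact le_of_lt h'
      · exact le_of_eq h'.symm
    rw [hπb, hminv, ← hminA] at hle1
    exact hne (le_antisymm (M_antitone hk hij) hle1)
  · rw [hbeq] at hπb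
    rw [hminA, ← hcoe, hπb]

lemma desc_iff (hP : IsSetPartition n P) (hk : StrictMono (fun i : Fin n => key P (π i)))
    {i : Fin n} (h1 : i.val + 1 < n) :
    i.val ∈ Desc n π ↔ mOf P (π ⟨i.val + 1, h1⟩) ≠ mOf P (π i) := by
  have hlt : i < (⟨i.val + 1, h1⟩ : Fin n) := by rw [Fin.lt_def]; simp
  have hkey := hk hlt
  rw [key_lt_iff] at hkey
  constructor
  · intro hd hne
    obtain ⟨hj, hdesc⟩ := mem_Desc.mp hd
    have hdesc' : π ⟨i.val + 1, h1⟩ < π i := hdesc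
    rcases hkey with h' | ⟨-, h'⟩
    · rw [hne] at h'; exact lt_irrefl _ h'
    · exact absurd h' (asymm hdesc')
  · intro hne
    have hb := boundary hP hk h1 hne
    have hlt2 : mOf P (π ⟨i.val + 1, h1⟩) < mOf P (π i) := by
      rcases hkey with h' | ⟨h', -⟩
      · exact h'
      · exact absurd h'.symm hne
    obtain ⟨B, hBP, hxB⟩ := hP.2.2 (π i)
    have hle := mOf_le hP hBP hxB
    have hfin : (π ⟨i.val + 1, h1⟩ : WithTop (Fin n)) < (π i : WithTop (Fin n)) := by
      rw [hb]; exact lt_of_lt_of_le hlt2 hle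
    rw [WithTop.coe_lt_coe] at hfin
    exact mem_Desc.mpr ⟨h1, hfin⟩

lemma rr_eq_iff_aux (hP : IsSetPartition n P) (hk : StrictMono (fun i : Fin n => key P (π i))) :
    ∀ (d : ℕ) (i j : Fin n), j.val = i.val + d →
    (rr n π i.val = rr n π j.val ↔ mOf P (π i) = mOf P (π j)) := by
  intro d
  induction d with
  | zero =>
    intro i j hji
    have : j = i := Fin.ext (by omega)
    subst this
    simp
  | succ d ih =>
    intro i j hji
    have hj'lt : i.val + d < n := by have := j.isLt; omega
    set j' : Fin n := ⟨i.val + d, hj'lt⟩ with hj'def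
    have h1 : j'.val + 1 < n := by have := j.isLt; simp [hj'def]; omega
    have hjeq : j = ⟨j'.val + 1, h1⟩ := Fin.ext (by simp [hj'def]; omega)
    have hπj : π j = π ⟨j'.val + 1, h1⟩ := by rw [hjeq]
    have hjval : j.val = j'.val + 1 := by rw [hjeq]
    have hIH := ih i j' rfl
    have hdesc := desc_iff hP hk (i := j') h1
    have hmono1 : rr n π i.val ≤ rr n π j'.val := rr_mono π (by omega)
    have hmono2 : rr n π j'.val ≤ rr n π j.val := rr_mono π (by omega)
    have hM1 : mOf P (π j) ≤ mOf P (π j') := M_antitone hk (by rw [Fin.le_def]; omega)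
    have hM2 : mOf P (π j') ≤ mOf P (π i) := M_antitone hk (by rw [Fin.le_def]; omega)
    constructor
    · intro h
      have h3 : rr n π j'.val = rr n π i.val := by omega
      have h4 : rr n π (j'.val + 1) = rr n π j'.val := by rw [← hjval]; omega
      have hnd : j'.val ∉ Desc n π := by
        intro hd
        have := rr_succ_mem π hd
        omega
      have hMeq : mOf P (π ⟨j'.val + 1, h1⟩) = mOf P (π j') := by
        by_contra hne
        exact hnd (hdesc.mpr hne)
      rw [hπj, hMeq]
      exact hIH.mp h3.symm
    · intro h
      have hMj' : mOf P (π j') = mOf P (π i) := le_antisymm hM2 (h ▸ hM1)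
      have hMeq : mOf P (π ⟨j'.val + 1, h1⟩) = mOf P (π j') := by
        rw [← hπj, ← h]
        exact hMj'.symm
      have hnd : j'.val ∉ Desc n π := fun hd => (hdesc.mp hd) hMeq
      have h4 := rr_succ_notMem π hnd
      have h5 : rr n π i.val = rr n π j'.val := hIH.mpr hMj'.symm
      rw [hjval, h4]
      exact h5

lemma rr_eq_iff (hP : IsSetPartition n P) (hk : StrictMono (fun i : Fin n => key P (π i)))
    (i j : Fin n) :
    rr n π i.val = rr n π j.val ↔ mOf P (π i) = mOf P (π j) := by
  rcases le_total i j with h | h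
  · exact rr_eq_iff_aux hP hk (j.val - i.val) i j (by have := Fin.le_def.mp h; omega)
  · rw [eq_comm, show (mOf P (π i) = mOf P (π j)) ↔ (mOf P (π j) = mOf P (π i)) from eq_comm]
    exact rr_eq_iff_aux hP hk (i.val - j.val) j i (by have := Fin.le_def.mp h; omega)

lemma blk_eq_block (hP : IsSetPartition n P) (hk : StrictMono (fun i : Fin n => key P (π i)))
    (i : Fin n) {A : Finset (Fin n)} (hAP : A ∈ P) (hiA : π i ∈ A) :
    blk n π (rr n π i.val) = A := by
  have hminA : mOf P (π i) = A.min := mOf_eq hP hAP hiA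
  ext y
  rw [mem_blk]
  constructor
  · intro h
    have hM : mOf P (π (π.symm y)) = mOf P (π i) := (rr_eq_iff hP hk _ i).mp h
    rw [π.apply_symm_apply] at hM
    obtain ⟨B, hBP, hyB⟩ := hP.2.2 y
    have hminB : mOf P y = B.min := mOf_eq hP hBP hyB
    have hBne : B.Nonempty := ⟨y, hyB⟩
    have hAne : A.Nonempty := ⟨π i, hiA⟩
    have hcc : ((B.min' hBne : Fin n) : WithTop (Fin n)) = ((A.min' hAne : Fin n)) := by
      rw [Finset.coe_min', Finset.coe_min', ← hminB, ← hminA, hM]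
    have hv : B.min' hBne = A.min' hAne := WithTop.coe_inj.mp hcc
    have hAB : A = B := block_unique hP hAP hBP (A.min'_mem hAne) (hv ▸ B.min'_mem hBne)
    exact hAB ▸ hyB
  · intro hyA
    have hminy : mOf P y = A.min := mOf_eq hP hAP hyA
    have hM : mOf P (π (π.symm y)) = mOf P (π i) := by
      rw [π.apply_symm_apply, hminy, hminA]
    exact (rr_eq_iff hP hk _ i).mpr hM

lemma Phi_eq (hn : 1 ≤ n) (hP : IsSetPartition n P)
    (hk : StrictMono (fun i : Fin n => key P (π i))) : Phi n π = P := by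
  classical
  apply Finset.Subset.antisymm
  · intro A' hA'
    obtain ⟨t, ht, rfl⟩ := Finset.mem_image.mp hA'
    rw [Finset.mem_range] at ht
    obtain ⟨i0, hi0, hr⟩ := rr_surj hn π (show t ≤ (Desc n π).card by omega)
    obtain ⟨A, hAP, hiA⟩ := hP.2.2 (π ⟨i0, hi0⟩)
    have hb := blk_eq_block hP hk ⟨i0, hi0⟩ hAP hiA
    have hb2 : blk n π t = A := by rw [← hr]; exact hb
    rw [hb2]; exact hAP
  · intro A hAP
    obtain ⟨x, hx⟩ := hP.1 A hAP
    have hb := blk_eq_block hP hk (π.symm x) hAP (by rw [π.apply_symm_apply]; exact hx)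
    rw [← hb]
    exact Finset.mem_image.mpr ⟨_, Finset.mem_range.mpr (Nat.lt_succ_of_le (rr_le π _)), rfl⟩

lemma avoid_of (hP : IsSetPartition n P)
    (hk : StrictMono (fun i : Fin n => key P (π i))) : AvoidsAdCB n π := by
  rintro i j hi hj hij ⟨h1, h2⟩
  have hJlt : (⟨j, Nat.lt_of_succ_lt hj⟩ : Fin n) < ⟨j + 1, hj⟩ := by rw [Fin.lt_def]; simp
  have hk1 := hk hJlt
  rw [key_lt_iff] at hk1
  have hMne : mOf P (π ⟨j + 1, hj⟩) ≠ mOf P (π ⟨j, Nat.lt_of_succ_lt hj⟩) := by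
    rcases hk1 with h' | ⟨-, h'⟩
    · exact ne_of_lt h'
    · exact absurd h' (asymm h2)
  have hb : (π ⟨j + 1, hj⟩ : WithTop (Fin n)) = mOf P (π ⟨j + 1, hj⟩) :=
    boundary hP hk (i := ⟨j, Nat.lt_of_succ_lt hj⟩) hj hMne
  obtain ⟨B, hBP, hxB⟩ := hP.2.2 (π ⟨i, hi⟩)
  have hle : mOf P (π ⟨i, hi⟩) ≤ (π ⟨i, hi⟩ : WithTop (Fin n)) := mOf_le hP hBP hxB
  have hlt3 : mOf P (π ⟨i, hi⟩) < mOf P (π ⟨j + 1, hj⟩) := by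
    rw [← hb]
    exact lt_of_le_of_lt hle (WithTop.coe_lt_coe.mpr h1)
  have hk2 := hk (show (⟨i, hi⟩ : Fin n) < ⟨j + 1, hj⟩ by rw [Fin.lt_def]; simp; omega)
  rw [key_lt_iff] at hk2
  rcases hk2 with h' | ⟨h', -⟩
  · exact asymm h' hlt3
  · rw [h'] at hlt3; exact lt_irrefl _ hlt3

end PartitionSide

lemma exists_sorted (P : Finset (Finset (Fin n))) :
    ∃ π : Equiv.Perm (Fin n), StrictMono (fun i : Fin n => key P (π i)) := by
  classical
  refine ⟨Tuple.sort (key P), ?_⟩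
  have hmono : Monotone (key P ∘ Tuple.sort (key P)) := Tuple.monotone_sort (key P)
  have hinj : Function.Injective (key P ∘ Tuple.sort (key P)) :=
    (key_injective P).comp (Tuple.sort (key P)).injective
  exact hmono.strictMono_of_injective hinj

lemma sorted_unique {P : Finset (Finset (Fin n))} {π σ : Equiv.Perm (Fin n)}
    (hπ : StrictMono (fun i : Fin n => key P (π i)))
    (hσ : StrictMono (fun i : Fin n => key P (σ i))) : π = σ := by
  have h1 : Set.range (fun i : Fin n => key P (π i)) = Set.range (key P) := by
    ext z
    constructor
    · rintro ⟨i, rfl⟩; exact ⟨π i, rfl⟩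
    · rintro ⟨x, rfl⟩
      exact ⟨π.symm x, show key P (π (π.symm x)) = key P x by rw [π.apply_symm_apply]⟩
  have h2 : Set.range (fun i : Fin n => key P (σ i)) = Set.range (key P) := by
    ext z
    constructor
    · rintro ⟨i, rfl⟩; exact ⟨σ i, rfl⟩
    · rintro ⟨x, rfl⟩
      exact ⟨σ.symm x, show key P (σ (σ.symm x)) = key P x by rw [σ.apply_symm_apply]⟩
  haveI : WellFoundedLT (Fin n) := Finite.to_wellFoundedLT
  have heq := (StrictMono.range_inj hπ hσ).mp (h1.trans h2.symm)
  apply Equiv.ext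
  intro i
  exact key_injective P (congrFun heq i)

end AdCBAux

/-- The number of (a-cb)-avoiding permutations of `[n]` with exactly `k` descents
is the Stirling number `S(n, k+1)`. -/
theorem avoid_adcb_des_eq_stirling (n k : ℕ) (hn : 1 ≤ n) :
    {π : Equiv.Perm (Fin n) | AvoidsAdCB n π ∧ des n π = k}.ncard =
      {P : Finset (Finset (Fin n)) | IsSetPartition n P ∧ P.card = k + 1}.ncard := by
  classical
  have hbij : Set.BijOn (AdCBAux.Phi n)
      {π : Equiv.Perm (Fin n) | AvoidsAdCB n π ∧ des n π = k}
      {P : Finset (Finset (Fin n)) | IsSetPartition n P ∧ P.card = k + 1} := by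
    refine ⟨?_, ?_, ?_⟩
    · rintro π ⟨ha, hd⟩
      refine ⟨AdCBAux.Phi_isPartition hn π, ?_⟩
      rw [AdCBAux.Phi_card hn π, ← AdCBAux.des_eq, hd]
    · rintro π ⟨haπ, -⟩ σ ⟨haσ, -⟩ h
      have hπ := AdCBAux.key_phi_strictMono hn π haπ
      have hσ := AdCBAux.key_phi_strictMono hn σ haσ
      rw [h] at hπ
      exact AdCBAux.sorted_unique hπ hσ
    · rintro P ⟨hP, hc⟩
      obtain ⟨π, hkk⟩ := AdCBAux.exists_sorted P
      have hphi : AdCBAux.Phi n π = P := AdCBAux.Phi_eq hn hP hkk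
      refine ⟨π, ⟨AdCBAux.avoid_of hP hkk, ?_⟩, hphi⟩
      have hcard := AdCBAux.Phi_card hn π
      rw [hphi, hc] at hcard
      have hdes := AdCBAux.des_eq π
      omega
  rw [← hbij.image_eq, Set.ncard_image_of_injOn hbij.injOn]
end

section
/- For every n ≥ 0, the number of permutations of [n] avoiding both (a-bc) and (a-cb) equals the number of involutions in S_n. -/
namespace AvoidInvolutionProof

open Equiv Equiv.Perm

/-! ### Generic option/equiv lemmas -/

theorem optionCongr_removeNone {α β : Type*} (e : Option α ≃ Option β)
    (h : e none = none) : (Equiv.removeNone e).optionCongr = e := by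
  apply Equiv.ext
  intro x
  cases x with
  | none => simp [h]
  | some a =>
      obtain ⟨b, hb⟩ : ∃ b, e (some a) = some b := by
        cases hb : e (some a) with
        | none => exact absurd (e.injective (hb.trans h.symm)) (by simp)
        | some b => exact ⟨b, rfl⟩
      simp only [Equiv.optionCongr_apply, Option.map_some]
      exact Equiv.removeNone_some e ⟨b, hb⟩

/-! ### Extension of a permutation by a fixed point -/

variable {m : ℕ}

/-- Extend a permutation of `Fin m` to one of `Fin (m+1)` fixing `p`,
permuting the other elements (indexed via `p.succAbove`). -/
def extO (p : Fin (m + 1)) (τ : Perm (Fin m)) : Perm (Fin (m + 1)) :=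
  ((finSuccEquiv' p).trans τ.optionCongr).trans (finSuccEquiv' p).symm

@[simp] theorem extO_apply_self (p : Fin (m + 1)) (τ : Perm (Fin m)) :
    extO p τ p = p := by
  simp [extO]

@[simp] theorem extO_apply_succAbove (p : Fin (m + 1)) (τ : Perm (Fin m)) (i : Fin m) :
    extO p τ (p.succAbove i) = p.succAbove (τ i) := by
  simp [extO]

theorem extO_mul (p : Fin (m + 1)) (τ ρ : Perm (Fin m)) :
    extO p τ * extO p ρ = extO p (τ * ρ) := by
  apply Equiv.ext
  intro x
  rcases eq_or_ne x p with rfl | hx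
  · simp [Equiv.Perm.mul_apply]
  · obtain ⟨i, rfl⟩ := Fin.exists_succAbove_eq hx
    simp [Equiv.Perm.mul_apply]

@[simp] theorem extO_one (p : Fin (m + 1)) : extO p 1 = 1 := by
  apply Equiv.ext
  intro x
  rcases eq_or_ne x p with rfl | hx
  · simp
  · obtain ⟨i, rfl⟩ := Fin.exists_succAbove_eq hx
    simp

theorem extO_injective (p : Fin (m + 1)) : Function.Injective (extO p) := by
  intro τ ρ h
  apply Equiv.ext
  intro i
  have := Equiv.ext_iff.1 h (p.succAbove i)
  simp only [extO_apply_succAbove] at this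
  exact Fin.succAbove_right_injective this

theorem extO_exists (p : Fin (m + 1)) (ρ : Perm (Fin (m + 1))) (h : ρ p = p) :
    ∃ τ, extO p τ = ρ := by
  refine ⟨Equiv.removeNone (((finSuccEquiv' p).symm.trans ρ).trans (finSuccEquiv' p)), ?_⟩
  have hn : (((finSuccEquiv' p).symm.trans ρ).trans (finSuccEquiv' p)) none = none := by
    simp [h]
  unfold extO
  rw [optionCongr_removeNone _ hn]
  apply Equiv.ext
  intro x
  simp

theorem extO_sq_iff (p : Fin (m + 1)) (τ : Perm (Fin m)) :
    extO p τ * extO p τ = 1 ↔ τ * τ = 1 := by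
  rw [extO_mul]
  constructor
  · intro h
    apply extO_injective p
    rw [h, extO_one]
  · intro h
    rw [h, extO_one]

/-! ### The avoidance predicate -/

def PA (n : ℕ) (π : Perm (Fin n)) : Prop := AvoidsAdBC n π ∧ AvoidsAdCB n π

/-- In an avoider, the value `0` can only occupy one of the last two positions. -/
theorem PA_zero_pos {π : Perm (Fin (m + 2))} (h : PA (m + 2) π) (k : ℕ)
    (hk : k + 2 < m + 2) : π ⟨k, by omega⟩ ≠ 0 := by
  intro h0
  have hkk1 : (⟨k, by omega⟩ : Fin (m + 2)) ≠ ⟨k + 1, by omega⟩ := by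
    simp [Fin.ext_iff]
  have hkk2 : (⟨k, by omega⟩ : Fin (m + 2)) ≠ ⟨k + 2, hk⟩ := by
    simp [Fin.ext_iff]
  have hk12 : (⟨k + 1, by omega⟩ : Fin (m + 2)) ≠ ⟨k + 2, hk⟩ := by
    simp [Fin.ext_iff]
  have hb : π ⟨k + 1, by omega⟩ ≠ 0 := fun hb =>
    hkk1 (π.injective (h0.trans hb.symm))
  have hc : π ⟨k + 2, hk⟩ ≠ 0 := fun hc =>
    hkk2 (π.injective (h0.trans hc.symm))
  have hbc : π ⟨k + 1, by omega⟩ ≠ π ⟨k + 2, hk⟩ := fun hbc => hk12 (π.injective hbc)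
  have h0b : π ⟨k, by omega⟩ < π ⟨k + 1, by omega⟩ := by
    rw [h0]; exact Fin.pos_of_ne_zero hb
  have h0c : π ⟨k, by omega⟩ < π ⟨k + 2, hk⟩ := by
    rw [h0]; exact Fin.pos_of_ne_zero hc
  rcases lt_or_gt_of_ne hbc with hlt | hgt
  · exact h.1 k (k + 1) (by omega) hk (by omega) ⟨h0b, hlt⟩
  · exact h.2 k (k + 1) (by omega) hk (by omega) ⟨h0c, hgt⟩

/-! ### Case A: value 0 at the last position -/

/-- The extension of `τ : Perm (Fin (m+1))` to `Fin (m+2)` placing value `0` at the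
last position and using `τ` (with values shifted by one) on the first `m+1` positions. -/
def caseA (τ : Perm (Fin (m + 1))) : Perm (Fin (m + 2)) :=
  ((finSuccEquiv' (Fin.last (m + 1))).trans τ.optionCongr).trans (finSuccEquiv' 0).symm

theorem caseA_last (τ : Perm (Fin (m + 1))) : caseA τ (Fin.last (m + 1)) = 0 := by
  simp [caseA]

theorem caseA_castSucc (τ : Perm (Fin (m + 1))) (i : Fin (m + 1)) :
    caseA τ i.castSucc = (τ i).succ := by
  simp only [caseA, Equiv.trans_apply, ← Fin.succAbove_last, finSuccEquiv'_succAbove,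
    Equiv.optionCongr_apply, Option.map_some, finSuccEquiv'_symm_some, Fin.zero_succAbove]

theorem caseA_mk (τ : Perm (Fin (m + 1))) (i : ℕ) (h : i < m + 1) (h2 : i < m + 2) :
    caseA τ ⟨i, h2⟩ = (τ ⟨i, h⟩).succ := by
  have : (⟨i, h2⟩ : Fin (m + 2)) = (⟨i, h⟩ : Fin (m + 1)).castSucc := rfl
  rw [this, caseA_castSucc]

theorem caseA_mk_last (τ : Perm (Fin (m + 1))) (h2 : m + 1 < m + 2) :
    caseA τ ⟨m + 1, h2⟩ = 0 := caseA_last τ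

theorem caseA_injective : Function.Injective (caseA (m := m)) := by
  intro τ ρ h
  apply Equiv.ext
  intro i
  have := Equiv.ext_iff.1 h i.castSucc
  rw [caseA_castSucc, caseA_castSucc] at this
  exact Fin.succ_injective _ this

theorem caseA_exists (π : Perm (Fin (m + 2))) (h : π (Fin.last (m + 1)) = 0) :
    ∃ τ, caseA τ = π := by
  refine ⟨Equiv.removeNone
    (((finSuccEquiv' (Fin.last (m + 1))).symm.trans π).trans (finSuccEquiv' 0)), ?_⟩
  have hn : ((((finSuccEquiv' (Fin.last (m + 1))).symm.trans π).trans
      (finSuccEquiv' 0))) none = none := by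
    simp [h]
  unfold caseA
  rw [optionCongr_removeNone _ hn]
  apply Equiv.ext
  intro x
  simp

theorem PA_caseA (τ : Perm (Fin (m + 1))) : PA (m + 2) (caseA τ) ↔ PA (m + 1) τ := by
  constructor
  · rintro ⟨hbc, hcb⟩
    constructor
    · intro i j hi hj hij hcontra
      refine hbc i j (Nat.lt_succ_of_lt hi) (Nat.lt_succ_of_lt hj) hij ?_
      rw [caseA_mk τ i hi, caseA_mk τ j (Nat.lt_of_succ_lt hj), caseA_mk τ (j + 1) hj]
      exact ⟨Fin.succ_lt_succ_iff.2 hcontra.1, Fin.succ_lt_succ_iff.2 hcontra.2⟩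
    · intro i j hi hj hij hcontra
      refine hcb i j (Nat.lt_succ_of_lt hi) (Nat.lt_succ_of_lt hj) hij ?_
      rw [caseA_mk τ i hi, caseA_mk τ j (Nat.lt_of_succ_lt hj), caseA_mk τ (j + 1) hj]
      exact ⟨Fin.succ_lt_succ_iff.2 hcontra.1, Fin.succ_lt_succ_iff.2 hcontra.2⟩
  · rintro ⟨hbc, hcb⟩
    constructor
    · intro i j hi hj hij hcontra
      rcases Nat.lt_or_ge (j + 1) (m + 1) with hj1 | hj1
      · have hjm : j < m + 1 := Nat.lt_of_succ_lt hj1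
        have him : i < m + 1 := Nat.lt_trans hij hjm
        refine hbc i j him hj1 hij ?_
        rw [caseA_mk τ i him, caseA_mk τ j hjm, caseA_mk τ (j + 1) hj1] at hcontra
        exact ⟨Fin.succ_lt_succ_iff.1 hcontra.1, Fin.succ_lt_succ_iff.1 hcontra.2⟩
      · have hj2 : j + 1 = m + 1 := Nat.le_antisymm (Nat.lt_succ_iff.mp hj) hj1
        have h2 := hcontra.2
        rw [show (⟨j + 1, hj⟩ : Fin (m + 2)) = ⟨m + 1, Nat.lt_succ_self (m + 1)⟩ from
          Fin.ext hj2, caseA_mk_last] at h2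
        exact absurd h2 (Fin.not_lt_zero _)
    · intro i j hi hj hij hcontra
      rcases Nat.lt_or_ge (j + 1) (m + 1) with hj1 | hj1
      · have hjm : j < m + 1 := Nat.lt_of_succ_lt hj1
        have him : i < m + 1 := Nat.lt_trans hij hjm
        refine hcb i j him hj1 hij ?_
        rw [caseA_mk τ i him, caseA_mk τ j hjm, caseA_mk τ (j + 1) hj1] at hcontra
        exact ⟨Fin.succ_lt_succ_iff.1 hcontra.1, Fin.succ_lt_succ_iff.1 hcontra.2⟩
      · have hj2 : j + 1 = m + 1 := Nat.le_antisymm (Nat.lt_succ_iff.mp hj) hj1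
        have h1 := hcontra.1
        rw [show (⟨j + 1, hj⟩ : Fin (m + 2)) = ⟨m + 1, Nat.lt_succ_self (m + 1)⟩ from
          Fin.ext hj2, caseA_mk_last] at h1
        exact absurd h1 (Fin.not_lt_zero _)

/-! ### Case B: value 0 at the second-to-last position -/

/-- Permutation of `Fin (m+1)` sending the last element to `v` and acting on the
rest (indexed by `castSucc`) as `τ`, relabelled by `v.succAbove`. -/
def gB (v : Fin (m + 1)) (τ : Perm (Fin m)) : Perm (Fin (m + 1)) :=
  ((finSuccEquiv' (Fin.last m)).trans τ.optionCongr).trans (finSuccEquiv' v).symm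

theorem gB_last (v : Fin (m + 1)) (τ : Perm (Fin m)) : gB v τ (Fin.last m) = v := by
  simp [gB]

theorem gB_castSucc (v : Fin (m + 1)) (τ : Perm (Fin m)) (i : Fin m) :
    gB v τ i.castSucc = v.succAbove (τ i) := by
  simp only [gB, Equiv.trans_apply, ← Fin.succAbove_last, finSuccEquiv'_succAbove,
    Equiv.optionCongr_apply, Option.map_some, finSuccEquiv'_symm_some]

/-- The extension of `τ : Perm (Fin m)` to `Fin (m+2)` placing value `0` at the
second-to-last position, value `v+1` at the last position, and using `τ`
(suitably relabelled) on the first `m` positions. -/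
def caseB (v : Fin (m + 1)) (τ : Perm (Fin m)) : Perm (Fin (m + 2)) :=
  ((finSuccEquiv' ((Fin.last m).castSucc)).trans (gB v τ).optionCongr).trans
    (finSuccEquiv' 0).symm

theorem caseB_apply_succAbove (v : Fin (m + 1)) (τ : Perm (Fin m)) (i : Fin (m + 1)) :
    caseB v τ (((Fin.last m).castSucc).succAbove i) = (gB v τ i).succ := by
  simp only [caseB, Equiv.trans_apply, finSuccEquiv'_succAbove,
    Equiv.optionCongr_apply, Option.map_some, finSuccEquiv'_symm_some, Fin.zero_succAbove]

theorem caseB_mk_n (v : Fin (m + 1)) (τ : Perm (Fin m)) (h : m < m + 2) :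
    caseB v τ ⟨m, h⟩ = 0 := by
  have : (⟨m, h⟩ : Fin (m + 2)) = (Fin.last m).castSucc := rfl
  rw [this]
  simp [caseB]

theorem caseB_mk_last (v : Fin (m + 1)) (τ : Perm (Fin m)) (h : m + 1 < m + 2) :
    caseB v τ ⟨m + 1, h⟩ = v.succ := by
  have hpos : (⟨m + 1, h⟩ : Fin (m + 2)) = ((Fin.last m).castSucc).succAbove (Fin.last m) := by
    rw [Fin.succAbove_of_le_castSucc _ _ le_rfl]
    rfl
  rw [hpos, caseB_apply_succAbove, gB_last]

theorem caseB_mk (v : Fin (m + 1)) (τ : Perm (Fin m)) (i : ℕ) (h : i < m) (h2 : i < m + 2) :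
    caseB v τ ⟨i, h2⟩ = (v.succAbove (τ ⟨i, h⟩)).succ := by
  have hpos : (⟨i, h2⟩ : Fin (m + 2)) =
      ((Fin.last m).castSucc).succAbove ((⟨i, h⟩ : Fin m).castSucc) := by
    rw [Fin.succAbove_of_castSucc_lt]
    · rfl
    · simp [Fin.lt_def, h]
  rw [hpos, caseB_apply_succAbove, gB_castSucc]

theorem caseB_injective (v v' : Fin (m + 1)) (τ τ' : Perm (Fin m))
    (h : caseB v τ = caseB v' τ') : v = v' ∧ τ = τ' := by
  have hv : v = v' := by
    have := Equiv.ext_iff.1 h ⟨m + 1, by omega⟩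
    rw [caseB_mk_last, caseB_mk_last] at this
    exact Fin.succ_injective _ this
  subst hv
  refine ⟨rfl, Equiv.ext fun i => ?_⟩
  have := Equiv.ext_iff.1 h ⟨i.1, by omega⟩
  rw [caseB_mk v τ i.1 i.2, caseB_mk v τ' i.1 i.2] at this
  have := Fin.succ_injective _ this
  have := Fin.succAbove_right_injective this
  simpa [Fin.eta] using this

theorem caseB_exists (π : Perm (Fin (m + 2))) (h : π ((Fin.last m).castSucc) = 0) :
    ∃ v τ, caseB v τ = π := by
  set f := (((finSuccEquiv' ((Fin.last m).castSucc)).symm.trans π).trans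
    (finSuccEquiv' 0)) with hf_def
  have hf : f none = none := by simp [hf_def, h]
  set g' := Equiv.removeNone f with hg'_def
  have hπ : ((finSuccEquiv' ((Fin.last m).castSucc)).trans g'.optionCongr).trans
      (finSuccEquiv' 0).symm = π := by
    rw [hg'_def, optionCongr_removeNone _ hf]
    apply Equiv.ext
    intro x
    simp [hf_def]
  set v := g' (Fin.last m) with hv_def
  set f₂ := (((finSuccEquiv' (Fin.last m)).symm.trans g').trans (finSuccEquiv' v)) with hf₂_def
  have hf₂ : f₂ none = none := by simp [hf₂_def, hv_def]
  refine ⟨v, Equiv.removeNone f₂, ?_⟩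
  have hg : gB v (Equiv.removeNone f₂) = g' := by
    unfold gB
    rw [optionCongr_removeNone _ hf₂]
    apply Equiv.ext
    intro x
    simp [hf₂_def]
  rw [caseB, hg, hπ]

theorem PA_caseB (v : Fin (m + 1)) (τ : Perm (Fin m)) :
    PA (m + 2) (caseB v τ) ↔ PA m τ := by
  have hm2 : m < m + 2 := Nat.lt_trans (Nat.lt_succ_self m) (Nat.lt_succ_self (m + 1))
  have mono : ∀ a b : Fin m, (v.succAbove a).succ < (v.succAbove b).succ ↔ a < b := by
    intro a b
    rw [Fin.succ_lt_succ_iff, Fin.succAbove_lt_succAbove_iff]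
  constructor
  · rintro ⟨hbc, hcb⟩
    constructor
    · intro i j hi hj hij hcontra
      refine hbc i j (Nat.lt_succ_of_lt (Nat.lt_succ_of_lt hi))
        (Nat.lt_succ_of_lt (Nat.lt_succ_of_lt hj)) hij ?_
      rw [caseB_mk v τ i hi, caseB_mk v τ j (Nat.lt_of_succ_lt hj), caseB_mk v τ (j + 1) hj]
      exact ⟨(mono _ _).2 hcontra.1, (mono _ _).2 hcontra.2⟩
    · intro i j hi hj hij hcontra
      refine hcb i j (Nat.lt_succ_of_lt (Nat.lt_succ_of_lt hi))
        (Nat.lt_succ_of_lt (Nat.lt_succ_of_lt hj)) hij ?_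
      rw [caseB_mk v τ i hi, caseB_mk v τ j (Nat.lt_of_succ_lt hj), caseB_mk v τ (j + 1) hj]
      exact ⟨(mono _ _).2 hcontra.1, (mono _ _).2 hcontra.2⟩
  · rintro ⟨hbc, hcb⟩
    constructor
    · intro i j hi hj hij hcontra
      rcases Nat.lt_or_ge (j + 1) m with hj1 | hj1
      · have hjm : j < m := Nat.lt_of_succ_lt hj1
        have him : i < m := Nat.lt_trans hij hjm
        refine hbc i j him hj1 hij ?_
        rw [caseB_mk v τ i him, caseB_mk v τ j hjm, caseB_mk v τ (j + 1) hj1] at hcontra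
        exact ⟨(mono _ _).1 hcontra.1, (mono _ _).1 hcontra.2⟩
      · rcases Nat.eq_or_lt_of_le hj1 with hj2 | hj2
        · -- j + 1 = m : the (j+1)-st value is 0
          have h2 := hcontra.2
          rw [show (⟨j + 1, hj⟩ : Fin (m + 2)) = ⟨m, hm2⟩ from Fin.ext hj2.symm,
            caseB_mk_n] at h2
          exact absurd h2 (Fin.not_lt_zero _)
        · -- j = m : the j-th value is 0
          have hjm : j = m :=
            Nat.le_antisymm (Nat.lt_succ_iff.mp (Nat.lt_of_succ_lt_succ hj))
              (Nat.lt_succ_iff.mp hj2)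
          have h1 := hcontra.1
          rw [show (⟨j, Nat.lt_of_succ_lt hj⟩ : Fin (m + 2)) = ⟨m, hm2⟩ from Fin.ext hjm,
            caseB_mk_n] at h1
          exact absurd h1 (Fin.not_lt_zero _)
    · intro i j hi hj hij hcontra
      rcases Nat.lt_or_ge (j + 1) m with hj1 | hj1
      · have hjm : j < m := Nat.lt_of_succ_lt hj1
        have him : i < m := Nat.lt_trans hij hjm
        refine hcb i j him hj1 hij ?_
        rw [caseB_mk v τ i him, caseB_mk v τ j hjm, caseB_mk v τ (j + 1) hj1] at hcontra
        exact ⟨(mono _ _).1 hcontra.1, (mono _ _).1 hcontra.2⟩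
      · rcases Nat.eq_or_lt_of_le hj1 with hj2 | hj2
        · -- j + 1 = m : the (j+1)-st value is 0
          have h1 := hcontra.1
          rw [show (⟨j + 1, hj⟩ : Fin (m + 2)) = ⟨m, hm2⟩ from Fin.ext hj2.symm,
            caseB_mk_n] at h1
          exact absurd h1 (Fin.not_lt_zero _)
        · -- j = m : the j-th value is 0
          have hjm : j = m :=
            Nat.le_antisymm (Nat.lt_succ_iff.mp (Nat.lt_of_succ_lt_succ hj))
              (Nat.lt_succ_iff.mp hj2)
          have h2 := hcontra.2
          rw [show (⟨j, Nat.lt_of_succ_lt hj⟩ : Fin (m + 2)) = ⟨m, hm2⟩ from Fin.ext hjm,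
            caseB_mk_n] at h2
          exact absurd h2 (Fin.not_lt_zero _)

/-! ### The recursion for avoiders -/

theorem cardA_rec (n : ℕ) :
    Nat.card {π : Perm (Fin (n + 2)) // PA (n + 2) π} =
      Nat.card {τ : Perm (Fin (n + 1)) // PA (n + 1) τ} +
        (n + 1) * Nat.card {τ : Perm (Fin n) // PA n τ} := by
  classical
  let F : ({τ : Perm (Fin (n + 1)) // PA (n + 1) τ} ⊕
      (Fin (n + 1) × {τ : Perm (Fin n) // PA n τ})) → {π : Perm (Fin (n + 2)) // PA (n + 2) π} :=
    fun x => match x with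
    | .inl ⟨τ, h⟩ => ⟨caseA τ, (PA_caseA τ).2 h⟩
    | .inr (v, ⟨τ, h⟩) => ⟨caseB v τ, (PA_caseB v τ).2 h⟩
  have hF : Function.Bijective F := by
    constructor
    · rintro (⟨τ, hτ⟩ | ⟨v, τ, hτ⟩) (⟨ρ, hρ⟩ | ⟨w, ρ, hρ⟩) h <;>
        simp only [F, Subtype.mk.injEq] at h
      · exact congrArg Sum.inl (Subtype.ext (caseA_injective h))
      · exfalso
        have := Equiv.ext_iff.1 h ⟨n, by omega⟩
        rw [caseA_mk τ n (by omega), caseB_mk_n] at this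
        exact Fin.succ_ne_zero _ this
      · exfalso
        have := Equiv.ext_iff.1 h ⟨n, by omega⟩
        rw [caseA_mk ρ n (by omega), caseB_mk_n] at this
        exact Fin.succ_ne_zero _ this.symm
      · obtain ⟨hv, hτρ⟩ := caseB_injective _ _ _ _ h
        subst hv
        exact congrArg Sum.inr (Prod.ext rfl (Subtype.ext hτρ))
    · rintro ⟨π, hπ⟩
      have h0 : π (π.symm 0) = 0 := π.apply_symm_apply 0
      have hval : (π.symm 0).1 = n ∨ (π.symm 0).1 = n + 1 := by
        by_contra hcon
        push_neg at hcon
        have hlt : (π.symm 0).1 + 2 < n + 2 := by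
          have := (π.symm 0).2
          omega
        refine PA_zero_pos hπ (π.symm 0).1 hlt ?_
        rwa [show (⟨(π.symm 0).1, by omega⟩ : Fin (n + 2)) = π.symm 0 from rfl]
      rcases hval with hval | hval
      · have hpos : π ((Fin.last n).castSucc) = 0 := by
          rwa [show (Fin.last n).castSucc = π.symm 0 from Fin.ext (by simp [hval])]
        obtain ⟨v, τ, hvτ⟩ := caseB_exists π hpos
        have hτ : PA n τ := (PA_caseB v τ).1 (hvτ ▸ hπ)
        exact ⟨.inr (v, ⟨τ, hτ⟩), Subtype.ext hvτ⟩
      · have hpos : π (Fin.last (n + 1)) = 0 := by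
          rwa [show Fin.last (n + 1) = π.symm 0 from Fin.ext (by simp [hval])]
        obtain ⟨τ, hτeq⟩ := caseA_exists π hpos
        have hτ : PA (n + 1) τ := (PA_caseA τ).1 (hτeq ▸ hπ)
        exact ⟨.inl ⟨τ, hτ⟩, Subtype.ext hτeq⟩
  rw [← Nat.card_eq_of_bijective F hF, Nat.card_sum, Nat.card_prod,
    Nat.card_eq_fintype_card (α := Fin (n + 1)), Fintype.card_fin]

/-! ### The recursion for involutions -/

theorem swap_mul_of_fixed {α : Type*} [DecidableEq α] (f : Perm α) {a b : α}
    (ha : f a = a) (hb : f b = b) : Equiv.swap a b * f = f * Equiv.swap a b := by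
  apply Equiv.ext
  intro x
  simp only [Equiv.Perm.mul_apply]
  rcases eq_or_ne x a with rfl | hxa
  · rw [ha, Equiv.swap_apply_left, hb]
  rcases eq_or_ne x b with rfl | hxb
  · rw [hb, Equiv.swap_apply_right, ha]
  · rw [Equiv.swap_apply_of_ne_of_ne hxa hxb,
      Equiv.swap_apply_of_ne_of_ne
        (fun hc => hxa (f.injective (hc.trans ha.symm)))
        (fun hc => hxb (f.injective (hc.trans hb.symm)))]

/-- The involution of `Fin (m+2)` swapping `0` with `v+1` and acting as `τ`
(relabelled) on the remaining elements. -/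
def caseI2 (v : Fin (m + 1)) (τ : Perm (Fin m)) : Perm (Fin (m + 2)) :=
  Equiv.swap 0 v.succ * extO 0 (extO v τ)

theorem caseI2_apply_zero (v : Fin (m + 1)) (τ : Perm (Fin m)) :
    caseI2 v τ 0 = v.succ := by
  simp only [caseI2, Equiv.Perm.mul_apply, extO_apply_self, Equiv.swap_apply_left]

theorem extO_zero_succ (τ : Perm (Fin (m + 1))) (i : Fin (m + 1)) :
    extO (0 : Fin (m + 2)) τ i.succ = (τ i).succ := by
  have h := extO_apply_succAbove (0 : Fin (m + 2)) τ i
  rwa [Fin.zero_succAbove, Fin.zero_succAbove] at h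

theorem extO_zero_fix_succ (v : Fin (m + 1)) (τ : Perm (Fin m)) :
    extO 0 (extO v τ) v.succ = v.succ := by
  rw [extO_zero_succ, extO_apply_self]

theorem caseI2_sq_iff (v : Fin (m + 1)) (τ : Perm (Fin m)) :
    caseI2 v τ * caseI2 v τ = 1 ↔ τ * τ = 1 := by
  set s := Equiv.swap (0 : Fin (m + 2)) v.succ with hs
  set u := extO (0 : Fin (m + 2)) (extO v τ) with hu
  have hcomm : s * u = u * s :=
    swap_mul_of_fixed u (extO_apply_self _ _) (extO_zero_fix_succ v τ)
  have hsq : (s * u) * (s * u) = u * u := by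
    calc (s * u) * (s * u) = s * ((u * s) * u) := by simp only [mul_assoc]
      _ = s * ((s * u) * u) := by rw [← hcomm]
      _ = (s * s) * (u * u) := by simp only [mul_assoc]
      _ = u * u := by rw [hs, Equiv.swap_mul_self, one_mul]
  show (s * u) * (s * u) = 1 ↔ _
  rw [hsq, hu, extO_sq_iff, extO_sq_iff]

theorem caseI2_injective (v v' : Fin (m + 1)) (τ τ' : Perm (Fin m))
    (h : caseI2 v τ = caseI2 v' τ') : v = v' ∧ τ = τ' := by
  have hv : v = v' := by
    have := Equiv.ext_iff.1 h 0
    rw [caseI2_apply_zero, caseI2_apply_zero] at this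
    exact Fin.succ_injective _ this
  subst hv
  have := mul_left_cancel (a := Equiv.swap (0 : Fin (m + 2)) v.succ)
    (show Equiv.swap (0 : Fin (m + 2)) v.succ * extO 0 (extO v τ) =
      Equiv.swap (0 : Fin (m + 2)) v.succ * extO 0 (extO v τ') from h)
  exact ⟨rfl, extO_injective v (extO_injective 0 this)⟩

theorem cardI_rec (n : ℕ) :
    Nat.card {σ : Perm (Fin (n + 2)) // σ * σ = 1} =
      Nat.card {σ : Perm (Fin (n + 1)) // σ * σ = 1} +
        (n + 1) * Nat.card {σ : Perm (Fin n) // σ * σ = 1} := by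
  classical
  let F : ({τ : Perm (Fin (n + 1)) // τ * τ = 1} ⊕
      (Fin (n + 1) × {τ : Perm (Fin n) // τ * τ = 1})) → {σ : Perm (Fin (n + 2)) // σ * σ = 1} :=
    fun x => match x with
    | .inl ⟨τ, h⟩ => ⟨extO 0 τ, (extO_sq_iff 0 τ).2 h⟩
    | .inr (v, ⟨τ, h⟩) => ⟨caseI2 v τ, (caseI2_sq_iff v τ).2 h⟩
  have hF : Function.Bijective F := by
    constructor
    · rintro (⟨τ, hτ⟩ | ⟨v, τ, hτ⟩) (⟨ρ, hρ⟩ | ⟨w, ρ, hρ⟩) h <;>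
        simp only [F, Subtype.mk.injEq] at h
      · exact congrArg Sum.inl (Subtype.ext (extO_injective 0 h))
      · exfalso
        have := Equiv.ext_iff.1 h 0
        rw [extO_apply_self, caseI2_apply_zero] at this
        exact Fin.succ_ne_zero _ this.symm
      · exfalso
        have := Equiv.ext_iff.1 h 0
        rw [extO_apply_self, caseI2_apply_zero] at this
        exact Fin.succ_ne_zero _ this
      · obtain ⟨hv, hτρ⟩ := caseI2_injective _ _ _ _ h
        subst hv
        exact congrArg Sum.inr (Prod.ext rfl (Subtype.ext hτρ))
    · rintro ⟨σ, hσ⟩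
      have hinv : σ⁻¹ = σ := inv_eq_of_mul_eq_one_right hσ
      rcases eq_or_ne (σ 0) 0 with h0 | h0
      · obtain ⟨τ, hτeq⟩ := extO_exists 0 σ h0
        have hτ : τ * τ = 1 := (extO_sq_iff 0 τ).1 (by rw [hτeq]; exact hσ)
        exact ⟨.inl ⟨τ, hτ⟩, Subtype.ext hτeq⟩
      · obtain ⟨v, hv⟩ := Fin.exists_succ_eq.2 h0
        set s := Equiv.swap (0 : Fin (n + 2)) v.succ with hs_def
        have hσ0 : σ 0 = v.succ := hv.symm
        have hσv : σ v.succ = 0 := by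
          rw [← hσ0]
          have := Equiv.ext_iff.1 hσ 0
          simpa [Equiv.Perm.mul_apply] using this
        set u := s * σ with hu_def
        have hu0 : u 0 = 0 := by
          simp [hu_def, hσ0, hs_def, Equiv.Perm.mul_apply]
        have huv : u v.succ = v.succ := by
          simp [hu_def, hσv, hs_def, Equiv.Perm.mul_apply]
        have husq : u * u = 1 := by
          have hconj : σ * s * σ = s := by
            rw [hs_def]
            have := Equiv.swap_apply_apply σ (0 : Fin (n + 2)) v.succ
            rw [hinv] at this
            rw [← this, hσ0, hσv, Equiv.swap_comm]
          calc u * u = s * ((σ * s * σ)) := by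
                simp only [hu_def, mul_assoc]
            _ = s * s := by rw [hconj]
            _ = 1 := Equiv.swap_mul_self _ _
        obtain ⟨ρ, hρeq⟩ := extO_exists 0 u hu0
        have hρv : ρ v = v := by
          have h2 : (ρ v).succ = v.succ := by
            rw [← extO_zero_succ ρ v, hρeq]; exact huv
          exact Fin.succ_injective _ h2
        obtain ⟨τ, hτeq⟩ := extO_exists v ρ hρv
        have hρsq : ρ * ρ = 1 := (extO_sq_iff 0 ρ).1 (by rw [hρeq]; exact husq)
        have hτ : τ * τ = 1 := (extO_sq_iff v τ).1 (by rw [hτeq]; exact hρsq)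
        refine ⟨.inr (v, ⟨τ, hτ⟩), Subtype.ext ?_⟩
        show caseI2 v τ = σ
        rw [caseI2, hτeq, hρeq, hu_def, ← mul_assoc, hs_def, Equiv.swap_mul_self, one_mul]
  rw [← Nat.card_eq_of_bijective F hF, Nat.card_sum, Nat.card_prod,
    Nat.card_eq_fintype_card (α := Fin (n + 1)), Fintype.card_fin]

/-! ### Base cases and conclusion -/

theorem PA_of_le_one {n : ℕ} (hn : n ≤ 1) (π : Perm (Fin n)) : PA n π := by
  constructor <;> intro i j hi hj hij <;> omega

theorem perm_eq_of_le_one {n : ℕ} (hn : n ≤ 1) (π ρ : Perm (Fin n)) : π = ρ := by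
  apply Equiv.ext
  intro i
  have : i.1 = 0 := by omega
  have h1 : (π i).1 = 0 := by have := (π i).2; omega
  have h2 : (ρ i).1 = 0 := by have := (ρ i).2; omega
  rw [Fin.ext_iff, h1, h2]

theorem card_base (n : ℕ) (hn : n ≤ 1) :
    Nat.card {π : Perm (Fin n) // PA n π} = Nat.card {σ : Perm (Fin n) // σ * σ = 1} := by
  have h1 : Nat.card {π : Perm (Fin n) // PA n π} = 1 := by
    haveI : Unique {π : Perm (Fin n) // PA n π} :=
      { default := ⟨1, PA_of_le_one hn 1⟩
        uniq := fun x => Subtype.ext (perm_eq_of_le_one hn _ _) }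
    exact Nat.card_unique
  have h2 : Nat.card {σ : Perm (Fin n) // σ * σ = 1} = 1 := by
    haveI : Unique {σ : Perm (Fin n) // σ * σ = 1} :=
      { default := ⟨1, one_mul 1⟩
        uniq := fun x => Subtype.ext (perm_eq_of_le_one hn _ _) }
    exact Nat.card_unique
  rw [h1, h2]

theorem card_eq : ∀ n : ℕ,
    Nat.card {π : Perm (Fin n) // PA n π} = Nat.card {σ : Perm (Fin n) // σ * σ = 1}
  | 0 => card_base 0 (by omega)
  | 1 => card_base 1 (by omega)
  | (n + 2) => by
      rw [cardA_rec n, cardI_rec n, card_eq (n + 1), card_eq n]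

end AvoidInvolutionProof

/-- The number of permutations of `[n]` avoiding both (a-bc) and (a-cb) equals the
number of involutions in `S_n`. -/
theorem avoid_adbc_adcb_eq_involutions (n : ℕ) :
    {π : Equiv.Perm (Fin n) | AvoidsAdBC n π ∧ AvoidsAdCB n π}.ncard =
      {σ : Equiv.Perm (Fin n) | σ * σ = 1}.ncard := by
  rw [← Nat.card_coe_set_eq, ← Nat.card_coe_set_eq]
  exact AvoidInvolutionProof.card_eq n
end

section
/- For every n ≥ 0, the following four sets of permutations of [n] coincide: the permutations avoiding both (a-bc) and (a-cb); those avoiding both (a-bc) and (acb); those avoiding both (abc) and (a-cb); and those avoiding both (abc) and (acb). -/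
/-- `π` avoids the pattern (abc): there is no (0-based) index `i` with `i + 2 < n`
and `π i < π (i+1) < π (i+2)`. -/
def AvoidsABC (n : ℕ) (π : Equiv.Perm (Fin n)) : Prop :=
  ∀ (i : ℕ) (h : i + 2 < n),
    ¬ (π ⟨i, by omega⟩ < π ⟨i + 1, by omega⟩ ∧
       π ⟨i + 1, by omega⟩ < π ⟨i + 2, h⟩)

/-- `π` avoids the pattern (acb): there is no (0-based) index `i` with `i + 2 < n`
and `π i < π (i+2) < π (i+1)`. -/
def AvoidsACB (n : ℕ) (π : Equiv.Perm (Fin n)) : Prop :=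
  ∀ (i : ℕ) (h : i + 2 < n),
    ¬ (π ⟨i, by omega⟩ < π ⟨i + 2, h⟩ ∧
       π ⟨i + 2, h⟩ < π ⟨i + 1, by omega⟩)

section Aux
variable {n : ℕ} (π : Equiv.Perm (Fin n))

lemma adbc_to_abc (h : AvoidsAdBC n π) : AvoidsABC n π := by
  intro i hi
  exact h i (i + 1) (by omega) hi (by omega)

lemma adcb_to_acb (h : AvoidsAdCB n π) : AvoidsACB n π := by
  intro i hi
  exact h i (i + 1) (by omega) hi (by omega)

lemma key (hABC : AvoidsABC n π) (hACB : AvoidsACB n π) :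
    ∀ (d i : ℕ) (hj : i + d + 2 < n),
      ¬ (π ⟨i, by omega⟩ < π ⟨i + d + 1, by omega⟩ ∧
         π ⟨i, by omega⟩ < π ⟨i + d + 2, hj⟩) := by
  intro d
  induction d with
  | zero =>
    intro i hj ⟨h1, h2⟩
    have hne : π ⟨i + 1, by omega⟩ ≠ π ⟨i + 2, hj⟩ := by
      intro h
      have := π.injective h
      simp [Fin.ext_iff] at this
    rcases lt_or_gt_of_ne hne with hlt | hgt
    · exact hABC i hj ⟨h1, hlt⟩
    · exact hACB i hj ⟨h2, hgt⟩
  | succ d ih =>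
    intro i hj ⟨h1, h2⟩
    -- positions: i, i+d+2, i+d+3; look at i+d+1
    have hne : π ⟨i + d + 2, by omega⟩ ≠ π ⟨i + d + 3, by omega⟩ := by
      intro h
      have := π.injective h
      simp [Fin.ext_iff] at this
    rcases lt_or_gt_of_ne hne with hlt | hgt
    · -- π(j) < π(j+1); not abc at i+d+1 gives π(i+d+1) ≥ π(i+d+2)
      have h3 : ¬ (π ⟨i + d + 1, by omega⟩ < π ⟨i + d + 2, by omega⟩) := by
        intro h4
        exact hABC (i + d + 1) (by omega) ⟨h4, hlt⟩
      have h5 : π ⟨i + d + 2, by omega⟩ ≤ π ⟨i + d + 1, by omega⟩ := le_of_not_gt h3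
      exact ih i (by omega) ⟨lt_of_lt_of_le h1 h5, h1⟩
    · have h3 : ¬ (π ⟨i + d + 1, by omega⟩ < π ⟨i + d + 3, by omega⟩) := by
        intro h4
        exact hACB (i + d + 1) (by omega) ⟨h4, hgt⟩
      have h5 : π ⟨i + d + 3, by omega⟩ ≤ π ⟨i + d + 1, by omega⟩ := le_of_not_gt h3
      exact ih i (by omega) ⟨lt_of_lt_of_le h2 h5, h1⟩

lemma main_lemma (hABC : AvoidsABC n π) (hACB : AvoidsACB n π) :
    AvoidsAdBC n π ∧ AvoidsAdCB n π := by
  have strong : ∀ (i j : ℕ) (hi : i < n) (hj : j + 1 < n), i < j →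
      ¬ (π ⟨i, hi⟩ < π ⟨j, Nat.lt_of_succ_lt hj⟩ ∧
         π ⟨i, hi⟩ < π ⟨j + 1, hj⟩) := by
    intro i j hi hj hij
    obtain ⟨d, rfl⟩ : ∃ d, j = i + d + 1 := ⟨j - i - 1, by omega⟩
    exact key π hABC hACB d i hj
  constructor
  · intro i j hi hj hij ⟨h1, h2⟩
    exact strong i j hi hj hij ⟨h1, lt_trans h1 h2⟩
  · intro i j hi hj hij ⟨h1, h2⟩
    exact strong i j hi hj hij ⟨lt_trans h1 h2, h1⟩

end Aux

/-- The four sets of permutations of `[n]` coincide: those avoiding {(a-bc), (a-cb)},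
{(a-bc), (acb)}, {(abc), (a-cb)}, and {(abc), (acb)}. -/
theorem avoid_sets_coincide (n : ℕ) :
    {π : Equiv.Perm (Fin n) | AvoidsAdBC n π ∧ AvoidsAdCB n π} =
      {π : Equiv.Perm (Fin n) | AvoidsAdBC n π ∧ AvoidsACB n π} ∧
    {π : Equiv.Perm (Fin n) | AvoidsAdBC n π ∧ AvoidsAdCB n π} =
      {π : Equiv.Perm (Fin n) | AvoidsABC n π ∧ AvoidsAdCB n π} ∧
    {π : Equiv.Perm (Fin n) | AvoidsAdBC n π ∧ AvoidsAdCB n π} =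
      {π : Equiv.Perm (Fin n) | AvoidsABC n π ∧ AvoidsACB n π} := by
  have main : ∀ π : Equiv.Perm (Fin n), (AvoidsAdBC n π ∧ AvoidsAdCB n π) ↔
      (AvoidsABC n π ∧ AvoidsACB n π) := by
    intro π
    constructor
    · rintro ⟨h1, h2⟩
      exact ⟨adbc_to_abc π h1, adcb_to_acb π h2⟩
    · rintro ⟨h1, h2⟩
      exact main_lemma π h1 h2
  refine ⟨?_, ?_, ?_⟩
  · ext π
    simp only [Set.mem_setOf_eq]
    constructor
    · rintro ⟨h1, h2⟩
      exact ⟨h1, adcb_to_acb π h2⟩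
    · rintro ⟨h1, h2⟩
      exact main_lemma π (adbc_to_abc π h1) h2
  · ext π
    simp only [Set.mem_setOf_eq]
    constructor
    · rintro ⟨h1, h2⟩
      exact ⟨adbc_to_abc π h1, h2⟩
    · rintro ⟨h1, h2⟩
      exact main_lemma π h1 (adcb_to_acb π h2)
  · ext π
    simp only [Set.mem_setOf_eq]
    exact main π
end

section
/- For every n ≥ 1 and every k with 0 ≤ k ≤ n, the number of permutations of [n+k] that avoid both (a-bc) and (a-cb) and have exactly n-1 descents equals the number of involutions in S_{n+k} having exactly n-k fixed points. -/
/-!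
An involution `σ` of `[m]` is encoded by the word listing its cycles in decreasing order of their
minima, a `2`-cycle `{a < b}` being written as the ascent `a b`. These words are exactly the
permutations avoiding (a-bc) and (a-cb): in such a permutation no two ascents overlap, and the first
letter of each ascent and the last letter of each descent are smaller than every earlier letter,
so the pairs at the ascents are the `2`-cycles of an involution. Ascents correspond to `2`-cycles,
so a word in `S_{n+k}` with `n - 1` descents encodes an involution with `k` two-cycles, that is,
with `n - k` fixed points.
-/

open Equiv Function

theorem Equiv.Perm.mul_self_eq_one_iff_involutive {α : Type*} (σ : Perm α) :
    σ * σ = 1 ↔ Involutive σ := by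
  simp [Perm.ext_iff, Involutive]

theorem two_mul_ncard_lt_apply_add_ncard_fixed {α : Type*} [LinearOrder α] [Finite α]
    {σ : Perm α} (hσ : Involutive σ) :
    2 * {v | v < σ v}.ncard + {v | σ v = v}.ncard = Nat.card α := by
  have hdown : {v | σ v < v} = σ '' {v | v < σ v} := by
    ext v
    rw [Equiv.image_eq_preimage_symm, Involutive.symm_eq_self_of_involutive σ hσ]
    simp [hσ v]
  have hmoved : {v | v < σ v} ∪ {v | σ v < v} = {v | σ v = v}ᶜ := by
    ext v
    simp [lt_or_lt_iff_ne, eq_comm]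
  have hdisj : Disjoint {v | v < σ v} {v | σ v < v} :=
    Set.disjoint_left.2 fun v h h' => lt_asymm h h'
  rw [← Set.ncard_add_ncard_compl {v | σ v = v}, ← hmoved, Set.ncard_union_eq hdisj, hdown,
    Set.ncard_image_of_injective _ σ.injective]
  ring

variable {m : ℕ}

def ascents (π : Perm (Fin m)) : Set ℕ :=
  {i | ∃ h : i + 1 < m, π ⟨i, Nat.lt_of_succ_lt h⟩ < π ⟨i + 1, h⟩}

theorem des_add_ncard_ascents (π : Perm (Fin m)) : des m π + (ascents π).ncard = m - 1 := by
  have hunion : {i : ℕ | ∃ h : i + 1 < m, π ⟨i + 1, h⟩ < π ⟨i, Nat.lt_of_succ_lt h⟩} ∪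
      ascents π = ↑(Finset.range (m - 1)) := by
    ext i
    simp only [ascents, Set.mem_union, Set.mem_ofPred_eq, Finset.coe_range, Set.mem_Iio]
    refine ⟨by rintro (⟨h, -⟩ | ⟨h, -⟩) <;> omega, fun hi => ?_⟩
    have h : i + 1 < m := by omega
    exact (lt_or_gt_of_ne (π.injective.ne (Fin.ne_of_val_ne (Nat.succ_ne_self i)))).imp
      (⟨h, ·⟩) (⟨h, ·⟩)
  have hdisj : Disjoint {i : ℕ | ∃ h : i + 1 < m, π ⟨i + 1, h⟩ < π ⟨i, Nat.lt_of_succ_lt h⟩}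
      (ascents π) :=
    Set.disjoint_left.2 fun _ ⟨_, h⟩ ⟨_, h'⟩ => lt_asymm h h'
  have hfin := hunion ▸ (Finset.range (m - 1)).finite_toSet
  rw [des, ← Set.ncard_union_eq hdisj (hfin.subset Set.subset_union_left)
    (hfin.subset Set.subset_union_right), hunion, Set.ncard_coe_finset, Finset.card_range]

def blockMin (σ : Perm (Fin m)) (v : Fin m) : Fin m := min v (σ v)

/-- The involution `σ` as a word: its cycles in decreasing order of their minima, each `2`-cycle
`{a < b}` written as the ascent `a b` (`Tuple.sort` breaks ties by increasing value). -/
noncomputable def blockWord (σ : Perm (Fin m)) : Perm (Fin m) :=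
  Tuple.sort (OrderDual.toDual ∘ blockMin σ)

section blockWord

variable {σ : Perm (Fin m)}

theorem blockMin_apply_self (hσ : Involutive σ) (v : Fin m) :
    blockMin σ (σ v) = blockMin σ v := by
  simp [blockMin, hσ v, min_comm]

theorem eq_or_eq_apply_of_blockMin_eq (hσ : Involutive σ) {u v : Fin m}
    (h : blockMin σ u = blockMin σ v) : u = v ∨ u = σ v := by
  unfold blockMin at h
  rcases min_choice u (σ u) with hu | hu <;> rcases min_choice v (σ v) with hv | hv <;>
    rw [hu, hv] at h
  · exact .inl h
  · exact .inr h
  · exact .inr (by rw [← h, hσ])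
  · exact .inl (σ.injective h)

theorem antitone_blockMin_blockWord : Antitone (blockMin σ ∘ blockWord σ) :=
  monotone_toDual_comp_iff.1 (Tuple.monotone_sort (OrderDual.toDual ∘ blockMin σ))

theorem blockWord_lt_of_blockMin_eq {i j : Fin m} (hij : i < j)
    (h : blockMin σ (blockWord σ i) = blockMin σ (blockWord σ j)) :
    blockWord σ i < blockWord σ j :=
  (Tuple.eq_sort_iff.1 rfl).2 i j hij (congrArg OrderDual.toDual h)

theorem blockWord_lt_of_blockMin_eq_self {i j : Fin m} (hij : i < j)
    (h : blockMin σ (blockWord σ j) = blockWord σ j) : blockWord σ j < blockWord σ i :=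
  lt_of_le_of_ne (h ▸ (antitone_blockMin_blockWord hij.le).trans (min_le_left _ _))
    ((blockWord σ).injective.ne hij.ne')

theorem exists_blockWord_eq_of_lt_apply (hσ : Involutive σ) {v : Fin m} (hv : v < σ v) :
    ∃ i, ∃ h : i + 1 < m, blockWord σ ⟨i, Nat.lt_of_succ_lt h⟩ = v ∧
      blockWord σ ⟨i + 1, h⟩ = σ v := by
  set w := blockWord σ
  set p := w.symm v
  set q := w.symm (σ v)
  have hp : w p = v := w.apply_symm_apply v
  have hq : w q = σ v := w.apply_symm_apply (σ v)
  have hmin : blockMin σ (w p) = blockMin σ (w q) := by rw [hp, hq, blockMin_apply_self hσ]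
  have hpq : p < q := by
    refine lt_of_le_of_ne (not_lt.1 fun hqp => ?_)
      fun hpq => hv.ne (hp.symm.trans ((congrArg w hpq).trans hq))
    exact (blockWord_lt_of_blockMin_eq hqp hmin.symm).not_gt (hp ▸ hq ▸ hv)
  have hsucc : (q : ℕ) = p + 1 := by
    -- a letter strictly between `v` and `σ v` would share their block minimum
    by_contra hne
    have hr : (p : ℕ) + 1 < q := by omega
    set r : Fin m := ⟨p + 1, hr.trans q.isLt⟩
    have hpr : p < r := Fin.mk_lt_mk.2 (Nat.lt_succ_self _)
    have hrq : r < q := Fin.mk_lt_mk.2 hr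
    have hr_min : blockMin σ (w r) = blockMin σ (w p) :=
      le_antisymm (antitone_blockMin_blockWord hpr.le)
        (hmin ▸ antitone_blockMin_blockWord hrq.le)
    rcases eq_or_eq_apply_of_blockMin_eq hσ hr_min with h | h
    · exact hpr.ne' (w.injective h)
    · exact hrq.ne (w.injective (by rw [h, hp, hq]))
  refine ⟨p, by omega, by simpa using hp, ?_⟩
  rw [← hq]
  exact congrArg w (Fin.ext hsucc.symm)

theorem blockWord_eq_apply_of_apply_lt (hσ : Involutive σ) {i : ℕ} (h : i + 1 < m)
    (hlt : σ (blockWord σ ⟨i + 1, h⟩) < blockWord σ ⟨i + 1, h⟩) :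
    blockWord σ ⟨i, Nat.lt_of_succ_lt h⟩ = σ (blockWord σ ⟨i + 1, h⟩) := by
  obtain ⟨j, hj, hj0, hj1⟩ :=
    exists_blockWord_eq_of_lt_apply hσ (v := σ (blockWord σ ⟨i + 1, h⟩)) (by rwa [hσ])
  rw [hσ] at hj1
  have hji : j = i := by simpa using (blockWord σ).injective hj1
  subst hji
  exact hj0

theorem blockWord_lt_succ_iff (hσ : Involutive σ) {i : ℕ} (h : i + 1 < m) :
    blockWord σ ⟨i, Nat.lt_of_succ_lt h⟩ < blockWord σ ⟨i + 1, h⟩ ↔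
      σ (blockWord σ ⟨i, Nat.lt_of_succ_lt h⟩) = blockWord σ ⟨i + 1, h⟩ := by
  constructor
  · intro hasc
    rcases lt_or_ge (σ (blockWord σ ⟨i + 1, h⟩)) (blockWord σ ⟨i + 1, h⟩) with hlt | hge
    · rw [blockWord_eq_apply_of_apply_lt hσ h hlt, hσ]
    · exact absurd hasc (blockWord_lt_of_blockMin_eq_self (Fin.mk_lt_mk.2 (Nat.lt_succ_self i))
        (min_eq_left hge)).not_gt
  · intro hpair
    refine blockWord_lt_of_blockMin_eq (Fin.mk_lt_mk.2 (Nat.lt_succ_self i)) ?_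
    rw [← hpair, blockMin_apply_self hσ]

theorem blockWord_avoidsAdBC (hσ : Involutive σ) : AvoidsAdBC m (blockWord σ) := by
  intro i j hi hj hij ⟨hij_lt, hasc⟩
  have hmin : blockMin σ (blockWord σ ⟨j, _⟩) = blockWord σ ⟨j, _⟩ :=
    min_eq_left ((blockWord_lt_succ_iff hσ hj).1 hasc ▸ hasc.le)
  exact (blockWord_lt_of_blockMin_eq_self (Fin.mk_lt_mk.2 hij) hmin).not_gt hij_lt

theorem blockWord_avoidsAdCB (hσ : Involutive σ) : AvoidsAdCB m (blockWord σ) := by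
  intro i j hi hj hij ⟨hij_lt, hdes⟩
  rcases lt_or_ge (σ (blockWord σ ⟨j + 1, hj⟩)) (blockWord σ ⟨j + 1, hj⟩) with hlt | hge
  · exact hdes.not_gt (blockWord_eq_apply_of_apply_lt hσ hj hlt ▸ hlt)
  · exact (blockWord_lt_of_blockMin_eq_self (Fin.mk_lt_mk.2 (hij.trans (Nat.lt_succ_self j)))
      (min_eq_left hge)).not_gt hij_lt

theorem ncard_ascents_blockWord (hσ : Involutive σ) :
    (ascents (blockWord σ)).ncard = {v | v < σ v}.ncard := by
  have hinj : Injective fun v => (((blockWord σ).symm v : Fin m) : ℕ) :=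
    Fin.val_injective.comp (blockWord σ).symm.injective
  have himage : ascents (blockWord σ) =
      (fun v => (((blockWord σ).symm v : Fin m) : ℕ)) '' {v | v < σ v} := by
    ext i
    constructor
    · rintro ⟨h, hasc⟩
      refine ⟨blockWord σ ⟨i, Nat.lt_of_succ_lt h⟩, ?_, by simp⟩
      rwa [Set.mem_ofPred_eq, (blockWord_lt_succ_iff hσ h).1 hasc]
    · rintro ⟨v, hv, rfl⟩
      obtain ⟨j, hj, hj0, hj1⟩ := exists_blockWord_eq_of_lt_apply hσ hv
      show (((blockWord σ).symm v : Fin m) : ℕ) ∈ _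
      rw [← hj0, Equiv.symm_apply_apply]
      exact ⟨hj, by rw [hj0, hj1]; exact hv⟩
  rw [himage, Set.ncard_image_of_injective _ hinj]

theorem des_blockWord_add_ncard_lt_apply (hσ : Involutive σ) (hm : 0 < m) :
    des m (blockWord σ) + {v | v < σ v}.ncard + 1 = m := by
  have := des_add_ncard_ascents (blockWord σ)
  rw [ncard_ascents_blockWord hσ] at this
  omega

theorem apply_eq_of_blockWord_eq {σ' : Perm (Fin m)} (hσ : Involutive σ) (hσ' : Involutive σ')
    (h : blockWord σ = blockWord σ') {v : Fin m} (hv : v < σ v) : σ' v = σ v := by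
  obtain ⟨i, hi, hi0, hi1⟩ := exists_blockWord_eq_of_lt_apply hσ hv
  have hasc := (blockWord_lt_succ_iff hσ hi).2 (by rw [hi0, hi1])
  rw [h] at hi0 hi1 hasc
  rw [← hi1, ← (blockWord_lt_succ_iff hσ' hi).1 hasc, hi0]

theorem apply_eq_of_blockWord_eq_of_ne {σ' : Perm (Fin m)} (hσ : Involutive σ)
    (hσ' : Involutive σ') (h : blockWord σ = blockWord σ') {v : Fin m} (hv : σ v ≠ v) :
    σ' v = σ v := by
  rcases lt_or_gt_of_ne hv with hlt | hgt
  · have hu := apply_eq_of_blockWord_eq hσ hσ' h (v := σ v) (by rwa [hσ])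
    rw [hσ] at hu
    calc σ' v = σ' (σ' (σ v)) := by rw [hu]
      _ = σ v := hσ' _
  · exact apply_eq_of_blockWord_eq hσ hσ' h hgt

theorem blockWord_injOn : Set.InjOn (blockWord (m := m)) {σ | Involutive σ} := by
  intro σ hσ σ' hσ' h
  refine Equiv.ext fun v => ?_
  by_cases hv : σ v = v
  · by_cases hv' : σ' v = v
    · rw [hv, hv']
    · exact (apply_eq_of_blockWord_eq_of_ne hσ' hσ h.symm hv')
  · exact (apply_eq_of_blockWord_eq_of_ne hσ hσ' h hv).symm

end blockWord

section ascentSwap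

variable {π : Perm (Fin m)}

theorem succ_notMem_ascents (hbc : AvoidsAdBC m π) {i : ℕ} (hi : i ∈ ascents π) :
    i + 1 ∉ ascents π :=
  fun ⟨h, hlt⟩ => hbc i (i + 1) (by omega) h (Nat.lt_succ_self i) ⟨hi.2, hlt⟩

open Classical in
noncomputable def ascentSwap (π : Perm (Fin m)) (p : Fin m) : Fin m :=
  if h : (p : ℕ) ∈ ascents π then ⟨p + 1, h.1⟩
  else if 0 < (p : ℕ) ∧ (p : ℕ) - 1 ∈ ascents π then ⟨p - 1, (Nat.sub_le _ _).trans_lt p.isLt⟩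
  else p

theorem ascentSwap_involutive (hbc : AvoidsAdBC m π) : Involutive (ascentSwap π) := by
  intro p
  by_cases h : (p : ℕ) ∈ ascents π
  · simp [ascentSwap, h, succ_notMem_ascents hbc h]
  · by_cases h' : 0 < (p : ℕ) ∧ (p : ℕ) - 1 ∈ ascents π
    · have h'' : (p : ℕ) - 1 + 1 = p := by omega
      ext
      simp [ascentSwap, h, h', h'']
    · simp [ascentSwap, h, h']

theorem le_ascentSwap_add_one (p : Fin m) : (p : ℕ) ≤ ascentSwap π p + 1 := by
  unfold ascentSwap
  split_ifs <;> simp <;> omega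

theorem apply_lt_apply_ascentSwap {p : Fin m} (hlt : p < ascentSwap π p) :
    π p < π (ascentSwap π p) := by
  unfold ascentSwap at hlt ⊢
  split_ifs at hlt ⊢ with h h'
  · exact h.2
  · exact absurd hlt (not_lt.2 (Fin.mk_le_of_le_val (Nat.sub_le _ _)))
  · exact absurd hlt (lt_irrefl p)

theorem pred_min_ascentSwap_notMem (hbc : AvoidsAdBC m π) {p : Fin m}
    (h0 : 0 < ((min p (ascentSwap π p) : Fin m) : ℕ)) :
    ((min p (ascentSwap π p) : Fin m) : ℕ) - 1 ∉ ascents π := by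
  unfold ascentSwap at h0 ⊢
  split_ifs at h0 ⊢ with h h'
  · rw [min_eq_left (Fin.mk_le_of_le_val (Nat.le_succ _))] at h0 ⊢
    exact fun hp => succ_notMem_ascents hbc hp (by rwa [Nat.sub_add_cancel h0])
  · rw [min_eq_right (Fin.mk_le_of_le_val (Nat.sub_le _ _))] at h0 ⊢
    dsimp only at h0 ⊢
    have hpred : (p : ℕ) - 1 - 1 + 1 = p - 1 := by omega
    exact fun hp => succ_notMem_ascents hbc hp (hpred ▸ h'.2)
  · rw [min_self] at h0 ⊢
    exact fun hp => h' ⟨h0, hp⟩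

theorem apply_lt_apply_of_pred_notMem_ascents (hcb : AvoidsAdCB m π) {s t : Fin m} (hst : s < t)
    (ht : (t : ℕ) - 1 ∉ ascents π) : π t < π s := by
  have hst' : (s : ℕ) < t := hst
  have ht1 : (t : ℕ) - 1 + 1 < m := by omega
  have e : (⟨t - 1 + 1, ht1⟩ : Fin m) = t := Fin.ext (by simp; omega)
  have hdesc : π t < π ⟨t - 1, Nat.lt_of_succ_lt ht1⟩ := by
    refine lt_of_le_of_ne ?_ (π.injective.ne (Fin.ne_of_val_ne (by simp; omega)))
    have hle := not_lt.1 fun h => ht ⟨ht1, h⟩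
    simpa only [e] using hle
  rcases (show (s : ℕ) < t - 1 ∨ (s : ℕ) = t - 1 by omega) with hs | hs
  · have hno := hcb s (t - 1) s.isLt ht1 hs
    simp only [e, Fin.eta] at hno
    exact lt_of_le_of_ne (not_lt.1 fun h => hno ⟨h, hdesc⟩) (π.injective.ne hst.ne')
  · rwa [show s = ⟨t - 1, Nat.lt_of_succ_lt ht1⟩ from Fin.ext hs]

/-- The involution whose `2`-cycles are the pairs of letters at the ascents of `π`. -/
noncomputable def ascentPairing (π : Perm (Fin m)) (hbc : AvoidsAdBC m π) : Perm (Fin m) :=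
  π * (ascentSwap_involutive hbc).toPerm _ * π⁻¹

theorem ascentPairing_apply_apply (hbc : AvoidsAdBC m π) (p : Fin m) :
    ascentPairing π hbc (π p) = π (ascentSwap π p) := by
  simp [ascentPairing]

theorem ascentPairing_involutive (hbc : AvoidsAdBC m π) : Involutive (ascentPairing π hbc) := by
  intro v
  simp [ascentPairing, ascentSwap_involutive hbc _]

theorem blockMin_ascentPairing_apply (hbc : AvoidsAdBC m π) (p : Fin m) :
    blockMin (ascentPairing π hbc) (π p) = π (min p (ascentSwap π p)) := by
  rw [blockMin, ascentPairing_apply_apply]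
  rcases lt_trichotomy p (ascentSwap π p) with h | h | h
  · rw [min_eq_left h.le, min_eq_left (apply_lt_apply_ascentSwap h).le]
  · rw [← h, min_self, min_self]
  · have hq : ascentSwap π p < ascentSwap π (ascentSwap π p) := by
      rwa [ascentSwap_involutive hbc]
    have := apply_lt_apply_ascentSwap hq
    rw [ascentSwap_involutive hbc] at this
    rw [min_eq_right h.le, min_eq_right this.le]

theorem ascentSwap_eq_or_blockMin_ascentPairing_lt (hbc : AvoidsAdBC m π)
    (hcb : AvoidsAdCB m π) {i j : Fin m} (hij : i < j) :
    (ascentSwap π i = j ∧ π i < π j) ∨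
      blockMin (ascentPairing π hbc) (π j) < blockMin (ascentPairing π hbc) (π i) := by
  by_cases hpair : ascentSwap π i = j
  · exact .inl ⟨hpair, hpair ▸ apply_lt_apply_ascentSwap (hpair ▸ hij)⟩
  -- blocks occupy intervals of positions, and the first letter of a block lies below all
  -- earlier letters by (a-cb)
  right
  rw [blockMin_ascentPairing_apply, blockMin_ascentPairing_apply]
  have hji : ((ascentSwap π j : Fin m) : ℕ) ≠ i :=
    fun h => hpair (Fin.ext h ▸ ascentSwap_involutive hbc j)
  have hij' : (i : ℕ) < j := hij
  have := le_ascentSwap_add_one (π := π) j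
  have hlt : min i (ascentSwap π i) < min j (ascentSwap π j) := by
    rw [Fin.lt_def, Fin.coe_min, Fin.coe_min]
    omega
  exact apply_lt_apply_of_pred_notMem_ascents hcb hlt
    (pred_min_ascentSwap_notMem hbc (by rw [Fin.lt_def] at hlt; omega))

theorem blockWord_ascentPairing (hbc : AvoidsAdBC m π) (hcb : AvoidsAdCB m π) :
    blockWord (ascentPairing π hbc) = π := by
  symm
  refine Tuple.eq_sort_iff.2 ⟨fun i j hij => ?_, fun i j hij heq => ?_⟩
  · rcases hij.lt_or_eq with hij | rfl
    · rcases ascentSwap_eq_or_blockMin_ascentPairing_lt hbc hcb hij with ⟨hpair, -⟩ | hlt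
      · show blockMin _ (π j) ≤ blockMin _ (π i)
        rw [← hpair, ← ascentPairing_apply_apply hbc,
          blockMin_apply_self (ascentPairing_involutive hbc)]
      · exact hlt.le
    · rfl
  · rcases ascentSwap_eq_or_blockMin_ascentPairing_lt hbc hcb hij with ⟨-, hlt⟩ | hlt
    · exact hlt
    · exact absurd heq hlt.ne'

end ascentSwap

/-- The number of permutations of `[n+k]` avoiding both (a-bc) and (a-cb) with
exactly `n - 1` descents equals the number of involutions in `S_{n+k}` with exactly
`n - k` fixed points. -/
theorem avoid_des_eq_involutions_fixed_points (n k : ℕ) (hn : 1 ≤ n) (hk : k ≤ n) :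
    {π : Equiv.Perm (Fin (n + k)) |
        AvoidsAdBC (n + k) π ∧ AvoidsAdCB (n + k) π ∧ des (n + k) π = n - 1}.ncard =
      {σ : Equiv.Perm (Fin (n + k)) |
        σ * σ = 1 ∧ {i : Fin (n + k) | σ i = i}.ncard = n - k}.ncard := by
  have hcount : ∀ σ : Perm (Fin (n + k)), Involutive σ →
      (des (n + k) (blockWord σ) = n - 1 ↔ {i | σ i = i}.ncard = n - k) := by
    intro σ hσ
    have hdes := des_blockWord_add_ncard_lt_apply hσ (by omega)
    have hfix := two_mul_ncard_lt_apply_add_ncard_fixed hσ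
    rw [Nat.card_eq_fintype_card, Fintype.card_fin] at hfix
    omega
  have himage : {π : Perm (Fin (n + k)) |
      AvoidsAdBC (n + k) π ∧ AvoidsAdCB (n + k) π ∧ des (n + k) π = n - 1} =
      blockWord '' {σ | σ * σ = 1 ∧ {i | σ i = i}.ncard = n - k} := by
    ext π
    simp only [Set.mem_ofPred_eq, Set.mem_image, Perm.mul_self_eq_one_iff_involutive]
    constructor
    · rintro ⟨hbc, hcb, hdes⟩
      have hσ := ascentPairing_involutive hbc
      refine ⟨ascentPairing π hbc, ⟨hσ, ?_⟩, blockWord_ascentPairing hbc hcb⟩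
      rwa [← hcount _ hσ, blockWord_ascentPairing hbc hcb]
    · rintro ⟨σ, ⟨hσ, hfix⟩, rfl⟩
      exact ⟨blockWord_avoidsAdBC hσ, blockWord_avoidsAdCB hσ, (hcount σ hσ).2 hfix⟩
  rw [himage, Set.InjOn.ncard_image (blockWord_injOn.mono fun σ hσ =>
    (Perm.mul_self_eq_one_iff_involutive σ).1 hσ.1)]
end
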